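/- arXiv:2205.01352 — 12 statements merged into one kernel-verified Lean document; each statement's English description precedes it below -/
import Mathlib

section
/- If δ is a linear mapping from a unital Banach algebra A into a unital A-bimodule M such that Aδ(A⁻¹) + δ(A)A⁻¹ = 0 for every invertible element A in A, then δ is a Jordan derivation (i.e., δ(A²) = δ(A)A + Aδ(A) for all A). -/
open MulOpposite

/-- If `δ` is a linear map from a unital Banach algebra `A` into a unital `A`-bimodule `M`
such that `A δ(A⁻¹) + δ(A) A⁻¹ = 0` for every invertible `A`, then `δ` is a Jordan
derivation. -/
theorem stmt0 {A : Type*} {M : Type*}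
    [NormedRing A] [NormedAlgebra ℂ A] [CompleteSpace A]
    [AddCommGroup M] [Module ℂ M] [Module A M] [Module Aᵐᵒᵖ M]
    [SMulCommClass A Aᵐᵒᵖ M] [IsScalarTower ℂ A M] [IsScalarTower ℂ Aᵐᵒᵖ M]
    (δ : A →ₗ[ℂ] M)
    (h : ∀ a : Aˣ, (a : A) • δ ((a⁻¹ : Aˣ) : A) + op ((a⁻¹ : Aˣ) : A) • δ (a : A) = 0) :
    ∀ a : A, δ (a * a) = op a • δ a + a • δ a := by
  -- rearrangement helpers
  have c1 : ∀ (s : ℂ) (x : A) (y : M), x • (s • y) = s • (x • y) :=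
    fun s x y => smul_comm x s y
  have c2 : ∀ (s : ℂ) (x : A) (y : M), op x • (s • y) = s • (op x • y) :=
    fun s x y => smul_comm (op x) s y
  have c3 : ∀ (x y : A) (z : M), op x • (y • z) = y • (op x • z) :=
    fun x y z => (smul_comm y (op x) z).symm
  -- δ 1 = 0
  have hδ1 : δ (1 : A) = 0 := by
    have h1 := h 1
    simp only [inv_one, Units.val_one, one_smul, op_one] at h1
    have h2 : (2 : ℂ) • δ (1 : A) = 0 := by rw [two_smul]; exact h1
    have := congrArg (fun m => ((2:ℂ)⁻¹) • m) h2
    simpa [smul_smul] using this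
  -- Jordan identity at units
  have key : ∀ u : Aˣ, δ ((u : A) * u) = op (u : A) • δ (u : A) + (u : A) • δ (u : A) := by
    intro u
    set c : ℝ := ‖(u : A)‖ + 1 with hc
    have hc0 : (0:ℝ) < c := by positivity
    set t : ℂ := (c : ℂ)⁻¹ with htdef
    have ht0 : t ≠ 0 := by
      simp only [htdef, ne_eq, inv_eq_zero, Complex.ofReal_eq_zero]
      exact ne_of_gt hc0
    have hnorm : ‖-(t • (u : A))‖ < 1 := by
      rw [norm_neg, norm_smul]
      simp only [htdef, norm_inv, Complex.norm_real, Real.norm_eq_abs]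
      calc |c|⁻¹ * ‖(u : A)‖ = c⁻¹ * ‖(u : A)‖ := by rw [abs_of_pos hc0]
        _ < c⁻¹ * c := mul_lt_mul_of_pos_left (by simp [hc]) (inv_pos.2 hc0)
        _ = 1 := inv_mul_cancel₀ (ne_of_gt hc0)
    set v : Aˣ := Units.oneSub (-(t • (u : A))) hnorm with hvdef
    have hv : (v : A) = 1 + t • (u : A) := by
      rw [hvdef, Units.val_oneSub, sub_neg_eq_add]
    -- u and v commute
    have hcomm : (u : A) * (v : A) = (v : A) * (u : A) := by
      rw [hv, mul_add, add_mul, mul_one, one_mul, mul_smul_comm, smul_mul_assoc]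
    have hvinv_u : (↑v⁻¹ : A) * (u : A) = (u : A) * (↑v⁻¹ : A) := by
      calc (↑v⁻¹ : A) * (u : A)
          = (↑v⁻¹ : A) * ((u : A) * ((v : A) * (↑v⁻¹ : A))) := by
            rw [Units.mul_inv, mul_one]
        _ = (↑v⁻¹ : A) * ((v : A) * (u : A)) * (↑v⁻¹ : A) := by
            rw [← hcomm]; noncomm_ring
        _ = (u : A) * (↑v⁻¹ : A) := by rw [← mul_assoc, Units.inv_mul, one_mul]
    -- (u*v)⁻¹ = u⁻¹ - t • v⁻¹
    have hwinv : ((↑(u * v)⁻¹ : A)) = (↑u⁻¹ : A) - t • (↑v⁻¹ : A) := by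
      apply Units.inv_eq_of_mul_eq_one_left
      show ((↑u⁻¹ : A) - t • (↑v⁻¹ : A)) * ((u : A) * (v : A)) = 1
      rw [sub_mul, ← mul_assoc, Units.inv_mul, one_mul, smul_mul_assoc,
        ← mul_assoc, hvinv_u, mul_assoc, Units.inv_mul, mul_one, hv]
      rw [add_sub_cancel_right]
    -- linearity consequences
    have hδv : δ (v : A) = t • δ (u : A) := by
      rw [hv, map_add, map_smul, hδ1, zero_add]
    have hδw : δ ((u : A) * (v : A)) = δ (u : A) + t • δ ((u : A) * (u : A)) := by
      have e : (u : A) * (v : A) = (u : A) + t • ((u : A) * (u : A)) := by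
        rw [hv, mul_add, mul_one, mul_smul_comm]
      rw [e, map_add, map_smul]
    -- inverse formulas
    have hδuinv : δ (↑u⁻¹ : A) = -((↑u⁻¹ : A) • (op (↑u⁻¹ : A) • δ (u : A))) := by
      have h1 : (u : A) • δ (↑u⁻¹ : A) = -(op (↑u⁻¹ : A) • δ (u : A)) :=
        eq_neg_of_add_eq_zero_left (h u)
      calc δ (↑u⁻¹ : A) = (↑u⁻¹ : A) • ((u : A) • δ (↑u⁻¹ : A)) := by
            rw [smul_smul, Units.inv_mul, one_smul]
        _ = -((↑u⁻¹ : A) • (op (↑u⁻¹ : A) • δ (u : A))) := by rw [h1, smul_neg]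
    have hδvinv : δ (↑v⁻¹ : A) = -(t • ((↑v⁻¹ : A) • (op (↑v⁻¹ : A) • δ (u : A)))) := by
      have h1 : (v : A) • δ (↑v⁻¹ : A) = -(op (↑v⁻¹ : A) • δ (v : A)) :=
        eq_neg_of_add_eq_zero_left (h v)
      calc δ (↑v⁻¹ : A) = (↑v⁻¹ : A) • ((v : A) • δ (↑v⁻¹ : A)) := by
            rw [smul_smul, Units.inv_mul, one_smul]
        _ = -((↑v⁻¹ : A) • (op (↑v⁻¹ : A) • δ (v : A))) := by rw [h1, smul_neg]
        _ = -(t • ((↑v⁻¹ : A) • (op (↑v⁻¹ : A) • δ (u : A)))) := by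
            rw [hδv, c2, c1]
    -- composite smul simplifications
    have hg1 : ∀ x : M, ((u : A) * (v : A)) • ((↑u⁻¹ : A) • x) = (v : A) • x := by
      intro x
      rw [smul_smul, hcomm, mul_assoc, Units.mul_inv, mul_one]
    have hg2 : ∀ x : M, ((u : A) * (v : A)) • ((↑v⁻¹ : A) • x) = (u : A) • x := by
      intro x
      rw [smul_smul, mul_assoc, Units.mul_inv, mul_one]
    have hr1 : ∀ x : M, op (u : A) • (op (↑u⁻¹ : A) • x) = x := by
      intro x
      rw [smul_smul, ← op_mul, Units.inv_mul, op_one, one_smul]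
    have hr2 : ∀ x : M, op (v : A) • (op (u : A) • (op (↑v⁻¹ : A) • x)) = op (u : A) • x := by
      intro x
      rw [smul_smul, smul_smul, ← op_mul, ← op_mul, ← mul_assoc, hvinv_u,
        mul_assoc, Units.inv_mul, mul_one]
    -- V-expansion helpers
    have hVs : ∀ x : M, (v : A) • x = x + t • ((u : A) • x) := by
      intro x; rw [hv, add_smul, one_smul, smul_assoc]
    have hVo : ∀ x : M, op (v : A) • x = x + t • (op (u : A) • x) := by
      intro x; rw [hv, op_add, op_smul, op_one, add_smul, one_smul, smul_assoc]
    -- substitute into h (u*v)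
    have hw' := h (u * v)
    rw [Units.val_mul, hwinv, map_sub, map_smul, hδuinv, hδvinv, hδw] at hw'
    have E1 := congrArg (fun z : M => op (v : A) • (op (u : A) • z)) hw'
    simp only [smul_zero] at E1
    have main : op (v : A) • (op (u : A) •
        (((u : A) * (v : A)) •
            (-((↑u⁻¹ : A) • (op (↑u⁻¹ : A) • δ (u : A)))
              - t • -(t • ((↑v⁻¹ : A) • (op (↑v⁻¹ : A) • δ (u : A)))))
          + op ((↑u⁻¹ : A) - t • (↑v⁻¹ : A)) • (δ (u : A) + t • δ ((u : A) * (u : A)))))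
        = t • (δ ((u : A) * (u : A)) - op (u : A) • δ (u : A) - (u : A) • δ (u : A)) := by
      simp only [op_sub, op_smul, sub_smul, smul_add, smul_sub, smul_neg, neg_neg,
        smul_assoc, c1, c2, c3, hg1, hg2, hr1, hr2]
      simp only [hVs, hVo, smul_add, smul_sub, smul_neg, c1, c2, c3, smul_smul]
      abel
    rw [main] at E1
    have E2 := congrArg (fun z : M => t⁻¹ • z) E1
    simp only [smul_smul, inv_mul_cancel₀ ht0, one_smul, smul_zero] at E2
    rw [sub_sub] at E2
    have E3 := sub_eq_zero.mp E2
    rw [E3, add_comm]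
  -- extend to all elements
  intro a
  set c : ℝ := ‖a‖ + 1 with hc
  have hc0 : (0:ℝ) < c := by positivity
  set μ : ℂ := (c : ℂ) with hμdef
  have hμ0 : μ ≠ 0 := by
    simp only [hμdef, ne_eq, Complex.ofReal_eq_zero]
    exact ne_of_gt hc0
  have hnorm : ‖μ⁻¹ • a‖ < 1 := by
    rw [norm_smul]
    simp only [hμdef, norm_inv, Complex.norm_real, Real.norm_eq_abs]
    calc |c|⁻¹ * ‖a‖ = c⁻¹ * ‖a‖ := by rw [abs_of_pos hc0]
      _ < c⁻¹ * c := mul_lt_mul_of_pos_left (by simp [hc]) (inv_pos.2 hc0)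
      _ = 1 := inv_mul_cancel₀ (ne_of_gt hc0)
  set v : Aˣ := Units.oneSub (μ⁻¹ • a) hnorm with hvdef
  have hb : (v : A) = 1 - μ⁻¹ • a := by rw [hvdef, Units.val_oneSub]
  have ha : a = μ • (1 : A) - μ • (v : A) := by
    rw [hb, smul_sub, smul_smul, mul_inv_cancel₀ hμ0, one_smul, sub_sub_cancel]
  have hk := key v
  rw [ha]
  have haa : (μ • (1:A) - μ • (v:A)) * (μ • (1:A) - μ • (v:A))
      = (μ*μ) • ((1:A) - (v:A) - (v:A) + (v:A)*(v:A)) := by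
    rw [← smul_sub μ (1:A) (v:A), smul_mul_smul_comm]
    congr 1
    noncomm_ring
  rw [haa]
  simp only [map_add, map_sub, map_smul, hδ1, hk, op_sub, op_smul, op_one,
    smul_zero, sub_smul, one_smul, smul_sub, smul_add, smul_smul, smul_assoc,
    c1, c2, c3]
  abel
end

section
/- Let W be a left separating point of M. If δ : A → M is linear and satisfies δ(W) = Aδ(B)* + δ(A)B* whenever AB* = W, then δ(I) = 0 and δ(W*) = δ(W)*. -/
open MulOpposite

section SeparatingPoint

variable {A M : Type*} [Semiring A] [StarMul A] [AddCommGroup M] [Module A M] [Module Aᵐᵒᵖ M]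
  [StarAddMonoid M] {W : A} {δ : A → M}

theorem map_one_eq_zero_of_separating (hW : ∀ m : M, W • m = 0 → m = 0)
    (hδ : ∀ a b : A, a * star b = W → δ W = a • star (δ b) + op (star b) • δ a) :
    δ 1 = 0 := by
  have hfactor := hδ W 1 (by rw [star_one, mul_one])
  rw [star_one, op_one, one_smul, right_eq_add] at hfactor
  exact star_eq_zero.mp (hW _ hfactor)

theorem map_star_eq_star_map (h1 : δ 1 = 0)
    (hδ : ∀ a b : A, a * star b = W → δ W = a • star (δ b) + op (star b) • δ a) :
    δ (star W) = star (δ W) := by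
  have hfactor := hδ 1 (star W) (by rw [star_star, one_mul])
  rw [h1, smul_zero, add_zero, one_smul] at hfactor
  rw [hfactor, star_star]

end SeparatingPoint

theorem stmt1_general {A : Type*} {M : Type*}
    [NormedRing A] [NormedAlgebra ℂ A] [StarRing A]
    [AddCommGroup M] [Module ℂ M] [Module A M] [Module Aᵐᵒᵖ M]
    [StarAddMonoid M]
    (W : A) (hW : ∀ m : M, W • m = 0 → m = 0)
    (δ : A →ₗ[ℂ] M)
    (hδ : ∀ a b : A, a * star b = W → δ W = a • star (δ b) + op (star b) • δ a) :
    δ 1 = 0 ∧ δ (star W) = star (δ W) :=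
  have h1 := map_one_eq_zero_of_separating hW hδ
  ⟨h1, map_star_eq_star_map h1 hδ⟩

/-- If `W` is a left separating point of the unital `*`-bimodule `M` and `δ` satisfies
`δ(W) = A δ(B)* + δ(A) B*` whenever `A B* = W`, then `δ(I) = 0` and `δ(W*) = δ(W)*`. -/
theorem stmt1 {A : Type*} {M : Type*}
    [NormedRing A] [NormedAlgebra ℂ A] [CompleteSpace A] [StarRing A]
    [AddCommGroup M] [Module ℂ M] [Module A M] [Module Aᵐᵒᵖ M]
    [SMulCommClass A Aᵐᵒᵖ M] [IsScalarTower ℂ A M] [IsScalarTower ℂ Aᵐᵒᵖ M]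
    [StarAddMonoid M]
    (hstar_left : ∀ (a : A) (m : M), star (a • m) = op (star a) • star m)
    (hstar_right : ∀ (a : A) (m : M), star (op a • m) = star a • star m)
    (W : A) (hW : ∀ m : M, W • m = 0 → m = 0)
    (δ : A →ₗ[ℂ] M)
    (hδ : ∀ a b : A, a * star b = W → δ W = a • star (δ b) + op (star b) • δ a) :
    δ 1 = 0 ∧ δ (star W) = star (δ W) :=
  stmt1_general W hW δ hδ
end

section
/- Let W be a left separating point of M. If δ : A → M is linear and satisfies δ(W) = Aδ(B)* + δ(A)B* whenever AB* = W, then δ is a Jordan derivation and δ(WA) = δ(W)A + Wδ(A*)* for every A ∈ A. -/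
/-!
Put `Q(t) = δ(t*)*`. Applied to the factorization `W = (W u) u⁻¹` with `u` invertible, the
hypothesis says that `W u Q(u⁻¹) u` is the value at `u` of the linear map `s ↦ δ(W) s - δ(W s)`.
For `n > ‖x‖` the elements `x ∓ n` are invertible and satisfy the resolvent identity
`(x - n)⁻¹ - (x + n)⁻¹ = 2n (x² - n²)⁻¹`; by linearity, after cancelling the separating point
`W` and conjugating by `x² - n²`, this becomes `Q(x²) = Q(x) x + x Q(x)`, because `Q` kills
integers. So `Q`, and with it `δ`, is a Jordan derivation. Jordan derivations satisfy
`u Q(u⁻¹) u = -Q(u)`, which turns the identity for `W u Q(u⁻¹) u` into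
`δ(W u) = δ(W) u + W Q(u)`, and every element is an invertible one plus an integer.
-/

open MulOpposite

theorem Units.inv_sub_inv_of_commute {A : Type*} [Ring A] {u v : Aˣ} (h : Commute (u : A) v) :
    (↑u⁻¹ : A) - ↑v⁻¹ = (v - u) * ↑(u * v)⁻¹ := by
  rw [mul_inv_rev, Units.val_mul, sub_mul, ← mul_assoc, ← mul_assoc, h.units_inv_right.eq]
  simp [mul_assoc]

theorem exists_isUnit_sub_natCast_and_add_natCast {A : Type*} [NormedRing A] [NormedAlgebra ℝ A]
    [CompleteSpace A] (x : A) : ∃ n : ℕ, n ≠ 0 ∧ IsUnit (x - n) ∧ IsUnit (x + n) := by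
  obtain ⟨n, hn⟩ := exists_nat_gt (‖x‖ * ‖(1 : A)‖)
  have hunit : ∀ k : ℝ, ‖k‖ = n → IsUnit (algebraMap ℝ A k - x) := fun k hk =>
    spectrum.mem_resolventSet_iff.mp (spectrum.mem_resolventSet_of_norm_lt_mul (hk ▸ hn))
  refine ⟨n, ?_, ?_, ?_⟩
  · rintro rfl
    exact (mul_nonneg (norm_nonneg x) (norm_nonneg _)).not_gt (by simpa using hn)
  · simpa using (hunit n (by simp)).neg
  · simpa [add_comm] using (hunit (-n) (by simp)).neg

section Star

variable {A M : Type*} [AddMonoid A] [StarAddMonoid A] [AddMonoid M] [StarAddMonoid M]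

def AddMonoidHom.conjStar (D : A →+ M) : A →+ M :=
  (starAddEquiv : M ≃+ M).toAddMonoidHom.comp (D.comp (starAddEquiv : A ≃+ A).toAddMonoidHom)

@[simp]
theorem AddMonoidHom.conjStar_apply (D : A →+ M) (a : A) : D.conjStar a = star (D (star a)) :=
  rfl

@[simp]
theorem AddMonoidHom.conjStar_conjStar (D : A →+ M) : D.conjStar.conjStar = D := by
  ext; simp

end Star

section Bimodule

variable {A M : Type*} [Ring A] [AddCommGroup M] [Module A M] [Module Aᵐᵒᵖ M]

def IsJordanDerivation (D : A →+ M) : Prop :=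
  ∀ a, D (a * a) = op a • D a + a • D a

/-- With `Q = δ.conjStar` and `t = B*` this is the hypothesis `δ(W) = A δ(B)* + δ(A) B*`
whenever `A B* = W`. -/
def ProductRuleAt (δ Q : A →+ M) (W : A) : Prop :=
  ∀ a t : A, a * t = W → δ W = a • Q t + op t • δ a

variable {D Q δ : A →+ M} {W : A}

theorem IsJordanDerivation.map_mul_add_mul (hD : IsJordanDerivation D) (a b : A) :
    D (a * b + b * a) = op b • D a + a • D b + op a • D b + b • D a := by
  have h := hD (a + b)
  simp only [add_mul, mul_add, map_add, hD a, hD b, op_add, add_smul, smul_add] at h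
  rw [map_add]
  linear_combination (norm := abel1) h

theorem IsJordanDerivation.conjStar [StarRing A] [StarAddMonoid M]
    (hl : ∀ (a : A) (m : M), star (a • m) = op (star a) • star m)
    (hr : ∀ (a : A) (m : M), star (op a • m) = star a • star m)
    (hD : IsJordanDerivation D) : IsJordanDerivation D.conjStar := by
  intro a
  simp only [AddMonoidHom.conjStar_apply, star_mul, hD (star a), star_add, hl, hr, star_star]
  exact add_comm _ _

theorem add_natCast_smul_op_add_natCast_smul (x : A) (n : ℕ) (m : M) :
    (x + n) • op (x + n) • m = (x - n) • op (x - n) • m + (2 * n) • (op x • m + x • m) := by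
  simp only [op_add, op_sub, op_natCast, add_smul, sub_smul, smul_add, smul_sub,
    Nat.cast_smul_eq_nsmul, smul_comm (M := A) (N := ℕ), two_mul]
  abel

theorem ProductRuleAt.map_natCast_eq_zero (hW : ∀ m : M, W • m = 0 → m = 0)
    (hδ : ProductRuleAt δ Q W) (n : ℕ) : Q n = 0 := by
  have h := hδ W 1 (mul_one W)
  rw [op_one, one_smul, right_eq_add] at h
  rw [← nsmul_one, map_nsmul, hW _ h, smul_zero]

variable [SMulCommClass A Aᵐᵒᵖ M]

theorem mul_smul_op_mul_smul_of_commute {a b : A} (h : Commute a b) (m : M) :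
    (a * b) • op (a * b) • m = a • op a • b • op b • m := by
  rw [show op (a * b) = op a * op b by rw [h.eq, op_mul], mul_smul, mul_smul,
    smul_comm b (op a)]

theorem Units.smul_op_smul_inv_smul_op_inv_smul {w z y : Aˣ} (hc : Commute (z : A) y)
    (hw : (w : A) = z * y) (m : M) :
    (w : A) • op (w : A) • (↑z⁻¹ : A) • op (↑z⁻¹ : A) • m = (y : A) • op (y : A) • m := by
  have hwz : Commute (w : A) ↑z⁻¹ := by
    rw [hw]; exact ((Commute.refl (z : A)).mul_left hc.symm).units_inv_right
  rw [← mul_smul_op_mul_smul_of_commute hwz, hw, hc.eq, mul_assoc, z.mul_inv, mul_one]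

theorem IsJordanDerivation.map_mul_mul [IsAddTorsionFree M] (hD : IsJordanDerivation D)
    (a b : A) : D (a * b * a) = a • op a • D b + op (b * a) • D a + (a * b) • D a := by
  apply nsmul_right_injective two_ne_zero
  have h := hD.map_mul_add_mul a (a * b + b * a)
  rw [show a * (a * b + b * a) + (a * b + b * a) * a = a * a * b + b * (a * a) + 2 • (a * b * a)
      by noncomm_ring, map_add, hD.map_mul_add_mul, hD.map_mul_add_mul, hD a, map_nsmul] at h
  simp only [op_add, op_mul, add_smul, smul_add, mul_smul, smul_comm (M := A) (N := Aᵐᵒᵖ)] at h ⊢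
  linear_combination (norm := abel1) h

theorem IsJordanDerivation.smul_op_smul_map_inv [IsAddTorsionFree M] (hD : IsJordanDerivation D)
    (u : Aˣ) : (u : A) • op (u : A) • D ↑u⁻¹ = -D u := by
  have h := hD.map_mul_mul u ↑u⁻¹
  rw [u.mul_inv, one_mul, u.inv_mul, op_one, one_smul, one_smul] at h
  linear_combination (norm := abel1) (-1 : ℤ) • h

namespace ProductRuleAt

theorem smul_smul_op_smul_map_inv (hδ : ProductRuleAt δ Q W) (u : Aˣ) :
    W • (u : A) • op (u : A) • Q ↑u⁻¹ = op (u : A) • δ W - δ (W * u) := by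
  have h := congrArg (op (u : A) • ·) (hδ (W * u) ↑u⁻¹ (by simp [mul_assoc]))
  simp only [smul_add, smul_smul, ← op_mul, u.inv_mul, op_one, one_smul] at h
  rw [h, ← smul_comm (W * u) (op (u : A)), mul_smul]
  abel

theorem inv_smul_op_inv_smul_map_eq_add (hW : ∀ m : M, W • m = 0 → m = 0)
    (hδ : ProductRuleAt δ Q W) {u v w : Aˣ} {k : ℕ} (h : (↑u⁻¹ : A) - ↑v⁻¹ = k • ↑w⁻¹) :
    (↑u⁻¹ : A) • op (↑u⁻¹ : A) • Q u
      = (↑v⁻¹ : A) • op (↑v⁻¹ : A) • Q v + k • (↑w⁻¹ : A) • op (↑w⁻¹ : A) • Q w := by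
  have e : ∀ z : Aˣ,
      W • (↑z⁻¹ : A) • op (↑z⁻¹ : A) • Q z = op (↑z⁻¹ : A) • δ W - δ (W * ↑z⁻¹) := by
    intro z; simpa using hδ.smul_smul_op_smul_map_inv z⁻¹
  refine sub_eq_zero.mp (hW _ ?_)
  rw [smul_sub, smul_add, smul_comm W k, e, e, e, sub_eq_iff_eq_add'.mp h]
  simp only [op_add, op_smul, add_smul, smul_assoc, smul_sub, mul_add, mul_smul_comm, map_add,
    map_nsmul]
  abel

theorem map_mul_self [IsAddTorsionFree M] (hW : ∀ m : M, W • m = 0 → m = 0)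
    (hδ : ProductRuleAt δ Q W) {x : A} {n : ℕ} (hn : n ≠ 0) (h₁ : IsUnit (x - n))
    (h₂ : IsUnit (x + n)) : Q (x * x) = op x • Q x + x • Q x := by
  obtain ⟨u, hu⟩ := h₁
  obtain ⟨v, hv⟩ := h₂
  have hQn := hδ.map_natCast_eq_zero hW
  have hcomm : Commute (u : A) v := by
    rw [hu, hv]
    exact ((Commute.refl x).add_right (Nat.cast_commute n x).symm).sub_left
      ((Nat.cast_commute n x).add_right (Nat.cast_commute n (n : A)))
  have hres : (↑u⁻¹ : A) - ↑v⁻¹ = (2 * n) • ↑(u * v)⁻¹ := by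
    rw [Units.inv_sub_inv_of_commute hcomm, hu, hv, add_sub_sub_cancel, ← two_mul, nsmul_eq_mul]
    push_cast; rfl
  have hQuv : Q ↑(u * v) = Q (x * x) := by
    rw [Units.val_mul, hu, hv, show (x - n) * (x + n) = x * x - ((n * n : ℕ) : A) by
      push_cast; rw [mul_add, sub_mul, sub_mul, (Nat.cast_commute n x).eq]; abel,
      map_sub, hQn, sub_zero]
  -- conjugating by `(x - n) (x + n)` turns the sandwiches by the inverses of `x - n`, `x + n`
  -- and `(x - n) (x + n)` into those by `x + n`, `x - n` and `1`
  have key := congrArg (fun m : M => ((u * v : Aˣ) : A) • op ((u * v : Aˣ) : A) • m)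
    (hδ.inv_smul_op_inv_smul_map_eq_add hW hres)
  simp only [smul_add, smul_comm _ (2 * n)] at key
  rw [Units.smul_op_smul_inv_smul_op_inv_smul hcomm (Units.val_mul u v),
    Units.smul_op_smul_inv_smul_op_inv_smul hcomm.symm (by rw [Units.val_mul, hcomm.eq]),
    Units.smul_op_smul_inv_smul_op_inv_smul (y := 1) (Commute.one_right _) (by simp),
    Units.val_one, op_one, one_smul, one_smul, hQuv, hu, hv, map_sub, map_add, hQn, sub_zero,
    add_zero, add_natCast_smul_op_add_natCast_smul] at key
  exact nsmul_right_injective (by positivity) (add_left_cancel key).symm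

theorem map_mul_unit [IsAddTorsionFree M] (hJ : IsJordanDerivation Q) (hδ : ProductRuleAt δ Q W)
    (u : Aˣ) : δ (W * u) = op (u : A) • δ W + W • Q u := by
  have h := hδ.smul_smul_op_smul_map_inv u
  rw [hJ.smul_op_smul_map_inv u, smul_neg] at h
  linear_combination (norm := abel1) h

theorem map_mul [IsAddTorsionFree M] (hW : ∀ m : M, W • m = 0 → m = 0)
    (hJ : IsJordanDerivation Q) (hδ : ProductRuleAt δ Q W) {a : A} {n : ℕ}
    (h : IsUnit (a - n)) : δ (W * a) = op a • δ W + W • Q a := by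
  obtain ⟨u, hu⟩ := h
  rw [show a = u + n by rw [hu, sub_add_cancel], mul_add, map_add, hδ.map_mul_unit hJ,
    ← nsmul_eq_mul', map_nsmul, op_add, add_smul, op_natCast, Nat.cast_smul_eq_nsmul, map_add,
    hδ.map_natCast_eq_zero hW, smul_add, smul_zero, add_zero]
  abel

end ProductRuleAt

end Bimodule

theorem stmt2_general {A : Type*} {M : Type*}
    [NormedRing A] [NormedAlgebra ℂ A] [CompleteSpace A] [StarRing A]
    [AddCommGroup M] [Module ℂ M] [Module A M] [Module Aᵐᵒᵖ M]
    [SMulCommClass A Aᵐᵒᵖ M]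
    [StarAddMonoid M]
    (hstar_left : ∀ (a : A) (m : M), star (a • m) = op (star a) • star m)
    (hstar_right : ∀ (a : A) (m : M), star (op a • m) = star a • star m)
    (W : A) (hW : ∀ m : M, W • m = 0 → m = 0)
    (δ : A →ₗ[ℂ] M)
    (hδ : ∀ a b : A, a * star b = W → δ W = a • star (δ b) + op (star b) • δ a) :
    (∀ a : A, δ (a * a) = op a • δ a + a • δ a) ∧
      (∀ a : A, δ (W * a) = op a • δ W + W • star (δ (star a))) := by
  have : IsAddTorsionFree M := .of_isTorsionFree ℂ M
  set Q : A →+ M := (δ : A →+ M).conjStar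
  have hprod : ProductRuleAt (δ : A →+ M) Q W := fun a t h => by
    simpa [Q] using hδ a (star t) (by simpa using h)
  have hJ : IsJordanDerivation Q := fun x => by
    obtain ⟨n, hn, h₁, h₂⟩ := exists_isUnit_sub_natCast_and_add_natCast x
    exact hprod.map_mul_self hW hn h₁ h₂
  have hJδ : IsJordanDerivation (δ : A →+ M) := by
    simpa [Q] using hJ.conjStar hstar_left hstar_right
  refine ⟨hJδ, fun a => ?_⟩
  obtain ⟨n, -, h, -⟩ := exists_isUnit_sub_natCast_and_add_natCast a
  exact hprod.map_mul hW hJ h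

/-- If `W` is a left separating point and `δ(W) = A δ(B)* + δ(A) B*` whenever `A B* = W`,
then `δ` is a Jordan derivation and `δ(W A) = δ(W) A + W δ(A*)*` for every `A`. -/
theorem stmt2 {A : Type*} {M : Type*}
    [NormedRing A] [NormedAlgebra ℂ A] [CompleteSpace A] [StarRing A]
    [AddCommGroup M] [Module ℂ M] [Module A M] [Module Aᵐᵒᵖ M]
    [SMulCommClass A Aᵐᵒᵖ M] [IsScalarTower ℂ A M] [IsScalarTower ℂ Aᵐᵒᵖ M]
    [StarAddMonoid M]
    (hstar_left : ∀ (a : A) (m : M), star (a • m) = op (star a) • star m)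
    (hstar_right : ∀ (a : A) (m : M), star (op a • m) = star a • star m)
    (W : A) (hW : ∀ m : M, W • m = 0 → m = 0)
    (δ : A →ₗ[ℂ] M)
    (hδ : ∀ a b : A, a * star b = W → δ W = a • star (δ b) + op (star b) • δ a) :
    (∀ a : A, δ (a * a) = op a • δ a + a • δ a) ∧
      (∀ a : A, δ (W * a) = op a • δ W + W • star (δ (star a))) :=
  stmt2_general hstar_left hstar_right W hW δ hδ
end

section
/- If δ : A → M is linear and satisfies δ(I) = Aδ(B)* + δ(A)B* for all A, B ∈ A with AB* = I, then δ is a Jordan derivation. -/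
open MulOpposite

/-- If `δ(I) = A δ(B)* + δ(A) B*` for all `A, B` with `A B* = I`, then `δ` is a
Jordan derivation. -/
theorem stmt3 {A : Type*} {M : Type*}
    [NormedRing A] [NormedAlgebra ℂ A] [CompleteSpace A] [StarRing A]
    [AddCommGroup M] [Module ℂ M] [Module A M] [Module Aᵐᵒᵖ M]
    [SMulCommClass A Aᵐᵒᵖ M] [IsScalarTower ℂ A M] [IsScalarTower ℂ Aᵐᵒᵖ M]
    [StarAddMonoid M]
    (hstar_left : ∀ (a : A) (m : M), star (a • m) = op (star a) • star m)
    (hstar_right : ∀ (a : A) (m : M), star (op a • m) = star a • star m)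
    (δ : A →ₗ[ℂ] M)
    (hδ : ∀ a b : A, a * star b = 1 → δ 1 = a • star (δ b) + op (star b) • δ a) :
    ∀ a : A, δ (a * a) = op a • δ a + a • δ a := by
  intro a
  -- scalar smul helpers
  have hA_smul : ∀ (c : ℂ) (m : M), (algebraMap ℂ A c) • m = c • m := fun c m =>
    algebraMap_smul A c m
  have hAop_smul : ∀ (c : ℂ) (m : M), op (algebraMap ℂ A c) • m = c • m := by
    intro c m
    rw [← MulOpposite.algebraMap_apply]
    exact algebraMap_smul Aᵐᵒᵖ c m
  have hswap : ∀ (c : ℂ) (x : A) (m : M), x • (c • m) = c • (x • m) := by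
    intro c x m
    rw [← hA_smul c m, ← mul_smul, ← Algebra.commutes, mul_smul, hA_smul]
  -- δ 1 = 0
  have hδ1 : δ (1:A) = 0 := by
    have h := hδ 1 1 (by simp)
    simp only [star_one, op_one, one_smul] at h
    have h2 : star (δ (1:A)) = 0 := by
      have h3 := h.symm
      rwa [add_eq_right] at h3
    rw [← star_star (δ (1:A)), h2, star_zero]
  -- key identity for units
  have key : ∀ u : Aˣ, (0:M) = (u:A) • star (δ (star ((u⁻¹:Aˣ):A)))
      + op ((u⁻¹:Aˣ):A) • δ (u:A) := by
    intro u
    have h := hδ (u:A) (star ((u⁻¹:Aˣ):A)) (by rw [star_star]; exact u.mul_inv)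
    rwa [star_star, hδ1] at h
  have keyφ : ∀ u : Aˣ, star (δ (star ((u⁻¹:Aˣ):A)))
      = -(((u⁻¹:Aˣ):A) • (op ((u⁻¹:Aˣ):A) • δ (u:A))) := by
    intro u
    have h : (u:A) • star (δ (star ((u⁻¹:Aˣ):A))) = -(op ((u⁻¹:Aˣ):A) • δ (u:A)) :=
      add_eq_zero_iff_eq_neg.mp (key u).symm
    have h2 := congrArg (fun m => ((u⁻¹:Aˣ):A) • m) h
    simpa only [← mul_smul, Units.inv_mul, one_smul, smul_neg] using h2
  have keyδ : ∀ u : Aˣ, δ (u:A)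
      = -((u:A) • (op (u:A) • star (δ (star ((u⁻¹:Aˣ):A))))) := by
    intro u
    have h : op ((u⁻¹:Aˣ):A) • δ (u:A) = -((u:A) • star (δ (star ((u⁻¹:Aˣ):A)))) :=
      add_eq_zero_iff_neg_eq.mp (key u).symm |>.symm
    have h2 := congrArg (fun m => op ((u:Aˣ):A) • m) h
    simp only [← mul_smul, ← op_mul, Units.inv_mul, op_one, one_smul, smul_neg] at h2
    rw [h2, neg_inj]
    exact (smul_comm _ _ _).symm
  -- construction of units
  have hunit : ∀ k : ℂ, ‖a‖ * ‖(1:A)‖ < ‖k‖ → IsUnit (algebraMap ℂ A k + a) := by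
    intro k hk
    have h : k ∈ resolventSet ℂ (-a) :=
      spectrum.mem_resolventSet_of_norm_lt_mul (by rwa [norm_neg])
    simpa [resolventSet, Set.mem_setOf_eq, sub_neg_eq_add] using h
  set r : ℝ := ‖a‖ * ‖(1:A)‖ + 1 with hr
  have hr0 : 0 ≤ ‖a‖ * ‖(1:A)‖ := mul_nonneg (norm_nonneg _) (norm_nonneg _)
  obtain ⟨U, hU⟩ := hunit (r:ℂ) (by rw [Complex.norm_real, Real.norm_of_nonneg (by linarith)]; linarith)
  obtain ⟨V, hV⟩ := hunit ((r:ℂ)+1)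
    (by rw [show ((r:ℂ)+1) = ((r+1:ℝ):ℂ) by push_cast; ring,
          Complex.norm_real, Real.norm_of_nonneg (by linarith)]; linarith)
  -- commutation
  have hc : ∀ (c : ℂ) (x : A), Commute (algebraMap ℂ A c) x := fun c x => Algebra.commutes c x
  have hcm : (U:A) * (V:A) = (V:A) * (U:A) := by
    rw [hU, hV]
    exact Commute.add_left ((hc _ _).add_right (hc _ a))
      (Commute.add_right (hc _ a).symm (Commute.refl a))
  -- partial fractions
  have hpf : (((U*V)⁻¹:Aˣ):A) = ((U⁻¹:Aˣ):A) - ((V⁻¹:Aˣ):A) := by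
    have h1 : ((U*V:Aˣ):A) * (((U⁻¹:Aˣ):A) - ((V⁻¹:Aˣ):A)) = 1 := by
      rw [Units.val_mul, mul_sub]
      have e1 : (U:A) * (V:A) * ((U⁻¹:Aˣ):A) = (V:A) := by
        rw [hcm]; exact Units.mul_inv_cancel_right _ _
      have e2 : (U:A) * (V:A) * ((V⁻¹:Aˣ):A) = (U:A) := Units.mul_inv_cancel_right _ _
      rw [e1, e2, hV, hU, add_sub_add_right_eq_sub, ← map_sub]
      norm_num
    have h2 := congrArg (fun z => (((U*V)⁻¹:Aˣ):A) * z) h1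
    simpa only [← mul_assoc, Units.inv_mul, one_mul, mul_one] using h2.symm
  -- δ of units
  have hδU : δ (U:A) = δ a := by
    rw [hU, map_add, Algebra.algebraMap_eq_smul_one, map_smul, hδ1, smul_zero, zero_add]
  have hδV : δ (V:A) = δ a := by
    rw [hV, map_add, Algebra.algebraMap_eq_smul_one, map_smul, hδ1, smul_zero, zero_add]
  -- φ values at inverses
  have hφU : star (δ (star ((U⁻¹:Aˣ):A))) = -(((U⁻¹:Aˣ):A) • (op ((U⁻¹:Aˣ):A) • δ a)) := by
    rw [keyφ U, hδU]
  have hφV : star (δ (star ((V⁻¹:Aˣ):A))) = -(((V⁻¹:Aˣ):A) • (op ((V⁻¹:Aˣ):A) • δ a)) := by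
    rw [keyφ V, hδV]
  -- φ at the inverse of the product
  have hφW : star (δ (star (((U*V)⁻¹:Aˣ):A)))
      = -(((U⁻¹:Aˣ):A) • (op ((U⁻¹:Aˣ):A) • δ a))
        + (((V⁻¹:Aˣ):A) • (op ((V⁻¹:Aˣ):A) • δ a)) := by
    rw [hpf, star_sub, map_sub, star_sub, hφU, hφV, sub_neg_eq_add]
  -- collapse lemmas
  have hcol1 : ((U*V:Aˣ):A) • (op ((U*V:Aˣ):A) • (((U⁻¹:Aˣ):A) • (op ((U⁻¹:Aˣ):A) • δ a)))
      = (V:A) • (op (V:A) • δ a) := by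
    rw [← smul_comm (((U⁻¹:Aˣ):A)) (op ((U*V:Aˣ):A)), ← mul_smul, ← mul_smul, ← op_mul]
    have e1 : ((U*V:Aˣ):A) * ((U⁻¹:Aˣ):A) = (V:A) := by
      rw [Units.val_mul, hcm]; exact Units.mul_inv_cancel_right _ _
    have e2 : ((U⁻¹:Aˣ):A) * ((U*V:Aˣ):A) = (V:A) := by
      rw [Units.val_mul]; exact Units.inv_mul_cancel_left _ _
    rw [e1, e2]
  have hcol2 : ((U*V:Aˣ):A) • (op ((U*V:Aˣ):A) • (((V⁻¹:Aˣ):A) • (op ((V⁻¹:Aˣ):A) • δ a)))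
      = (U:A) • (op (U:A) • δ a) := by
    rw [← smul_comm (((V⁻¹:Aˣ):A)) (op ((U*V:Aˣ):A)), ← mul_smul, ← mul_smul, ← op_mul]
    have e1 : ((U*V:Aˣ):A) * ((V⁻¹:Aˣ):A) = (U:A) := by
      rw [Units.val_mul]; exact Units.mul_inv_cancel_right _ _
    have e2 : ((V⁻¹:Aˣ):A) * ((U*V:Aˣ):A) = (U:A) := by
      rw [Units.val_mul, hcm]; exact Units.inv_mul_cancel_left _ _
    rw [e1, e2]
  -- δ of the product, collapsed
  have hδW : δ ((U*V:Aˣ):A) = (V:A) • (op (V:A) • δ a) - (U:A) • (op (U:A) • δ a) := by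
    rw [keyδ (U*V), hφW, smul_add, smul_add, smul_neg, smul_neg, hcol1, hcol2]
    abel
  -- expand δ of product directly
  have hδprod : δ ((U*V:Aˣ):A) = (2*(r:ℂ)+1) • δ a + δ (a*a) := by
    have expand : ((U*V:Aˣ):A)
        = algebraMap ℂ A ((r:ℂ)*((r:ℂ)+1)) + ((2*(r:ℂ)+1) • a + a*a) := by
      rw [Units.val_mul, hU, hV, add_mul, mul_add, mul_add, ← map_mul,
        ← Algebra.commutes ((r:ℂ)+1) a, ← Algebra.smul_def, ← Algebra.smul_def]
      rw [show (2*(r:ℂ)+1) • a = (r:ℂ) • a + ((r:ℂ)+1) • a by rw [← add_smul]; ring_nf]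
      abel
    rw [expand, map_add, map_add, map_smul, Algebra.algebraMap_eq_smul_one, map_smul,
      hδ1, smul_zero, zero_add]
  -- expand the right-hand sides
  have hRV : (V:A) • (op (V:A) • δ a)
      = ((r:ℂ)+1) • (((r:ℂ)+1) • δ a) + (((r:ℂ)+1) • (op a • δ a)
        + (((r:ℂ)+1) • (a • δ a) + a • (op a • δ a))) := by
    simp only [hV, op_add, add_smul, smul_add, hA_smul, hAop_smul, hswap]
    abel
  have hRU : (U:A) • (op (U:A) • δ a)
      = (r:ℂ) • ((r:ℂ) • δ a) + ((r:ℂ) • (op a • δ a)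
        + ((r:ℂ) • (a • δ a) + a • (op a • δ a))) := by
    simp only [hU, op_add, add_smul, smul_add, hA_smul, hAop_smul, hswap]
    abel
  -- conclude
  have combine : ∀ (X P Q R : M),
      (((r:ℂ)+1) • (((r:ℂ)+1) • X) + (((r:ℂ)+1) • P + (((r:ℂ)+1) • Q + R)))
        - ((r:ℂ) • ((r:ℂ) • X) + ((r:ℂ) • P + ((r:ℂ) • Q + R)))
      = (2*(r:ℂ)+1) • X + (P + Q) := by
    intro X P Q R
    rw [smul_smul, smul_smul,
      show ((r:ℂ)+1) * ((r:ℂ)+1) = ((r:ℂ)*(r:ℂ)) + (2*(r:ℂ)+1) by ring,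
      show (((r:ℂ)+1) : ℂ) • P = (r:ℂ) • P + P by rw [add_smul, one_smul],
      show (((r:ℂ)+1) : ℂ) • Q = (r:ℂ) • Q + Q by rw [add_smul, one_smul],
      add_smul]
    abel
  have E := hδprod.symm.trans hδW
  rw [hRV, hRU, combine] at E
  exact add_left_cancel E
end

section
/- Suppose every Jordan derivation from A into M is a derivation, and W is a left separating point of M. If δ : A → M is linear and satisfies δ(W) = Aδ(B)* + δ(A)B* whenever AB* = W, then δ is a *-derivation (a derivation with δ(A*) = δ(A)* for all A). -/
open MulOpposite

/-- Suppose every Jordan derivation from `A` into `M` is a derivation and `W` is a left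
separating point of `M`. If `δ(W) = A δ(B)* + δ(A) B*` whenever `A B* = W`, then `δ` is a
`*`-derivation. -/
theorem stmt4 {A : Type*} {M : Type*}
    [NormedRing A] [NormedAlgebra ℂ A] [CompleteSpace A] [StarRing A]
    [AddCommGroup M] [Module ℂ M] [Module A M] [Module Aᵐᵒᵖ M]
    [SMulCommClass A Aᵐᵒᵖ M] [IsScalarTower ℂ A M] [IsScalarTower ℂ Aᵐᵒᵖ M]
    [StarAddMonoid M]
    (hstar_left : ∀ (a : A) (m : M), star (a • m) = op (star a) • star m)
    (hstar_right : ∀ (a : A) (m : M), star (op a • m) = star a • star m)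
    (hJD : ∀ d : A →ₗ[ℂ] M, (∀ a : A, d (a * a) = op a • d a + a • d a) →
      ∀ a b : A, d (a * b) = op b • d a + a • d b)
    (W : A) (hW : ∀ m : M, W • m = 0 → m = 0)
    (δ : A →ₗ[ℂ] M)
    (hδ : ∀ a b : A, a * star b = W → δ W = a • star (δ b) + op (star b) • δ a) :
    (∀ a b : A, δ (a * b) = op b • δ a + a • δ b) ∧
      (∀ a : A, δ (star a) = star (δ a)) := by
  -- ## basic auxiliary facts
  have starM_inj : ∀ m : M, star m = 0 → m = 0 := by
    intro m h
    have h2 := congrArg star h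
    rwa [star_star, star_zero] at h2
  have kill : ∀ m : M, op (star W) • m = 0 → m = 0 := by
    intro m h
    have h2 : star (op (star W) • m) = 0 := by rw [h, star_zero]
    rw [hstar_right, star_star] at h2
    exact starM_inj m (hW _ h2)
  have scommA : ∀ (c : ℂ) (a : A) (m : M), a • (c • m) = c • (a • m) := by
    intro c a m
    calc a • (c • m) = a • ((c • (1:A)) • m) := by rw [smul_assoc, one_smul]
    _ = (a * (c • (1:A))) • m := by rw [mul_smul]
    _ = (c • (a * 1)) • m := by rw [mul_smul_comm]
    _ = (c • a) • m := by rw [mul_one]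
    _ = c • (a • m) := by rw [smul_assoc]
  have scommOp : ∀ (c : ℂ) (g : Aᵐᵒᵖ) (m : M), g • (c • m) = c • (g • m) := by
    intro c g m
    calc g • (c • m) = g • ((c • (1:Aᵐᵒᵖ)) • m) := by rw [smul_assoc, one_smul]
    _ = (g * (c • (1:Aᵐᵒᵖ))) • m := by rw [mul_smul]
    _ = (c • (g * 1)) • m := by rw [mul_smul_comm]
    _ = (c • g) • m := by rw [mul_one]
    _ = c • (g • m) := by rw [smul_assoc]
  have natSmulA : ∀ (k : ℕ) (a : A), (k:ℂ) • a = (k:A) * a := by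
    intro k a; rw [Algebra.smul_def, map_natCast]
  have natSmulM : ∀ (k : ℕ) (m : M), ((k:A)) • m = (k:ℂ) • m := by
    intro k m
    rw [← map_natCast (algebraMap ℂ A) k, algebraMap_smul]
  have natSmulOp : ∀ (k : ℕ) (m : M), (op ((k:A))) • m = (k:ℂ) • m := by
    intro k m
    rw [← map_natCast (algebraMap ℂ A) k, ← MulOpposite.algebraMap_apply, algebraMap_smul]
  have starNatM : ∀ (k : ℕ) (m : M), star ((k:ℂ) • m) = (k:ℂ) • star m := by
    intro k m
    rw [← natSmulM, hstar_left, star_natCast, natSmulOp]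
  have starNatA : ∀ (k : ℕ) (a : A), star ((k:ℂ) • a) = (k:ℂ) • star a := by
    intro k a
    rw [natSmulA, star_mul, star_natCast, natSmulA, (Nat.cast_commute k (star a)).eq]
  -- δ 1 = 0
  have hδ1 : δ (1:A) = 0 := by
    have h := hδ W 1 (by rw [star_one, mul_one])
    rw [star_one, op_one, one_smul] at h
    have h0 : W • star (δ 1) = 0 := by
      have h2 : W • star (δ 1) + δ W = 0 + δ W := by rw [← h, zero_add]
      exact add_right_cancel h2
    have h1 := hW _ h0
    exact starM_inj _ h1
  have hδnat : ∀ k : ℕ, δ ((k:A)) = 0 := by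
    intro k
    have h : ((k:A)) = (k:ℂ) • (1:A) := by rw [natSmulA, mul_one]
    rw [h, map_smul, hδ1, smul_zero]
  -- starred instance of the hypothesis (family II*)
  have EII : ∀ x ix : A, x * ix = 1 →
      star (δ W) = x • star (δ (W * star ix)) + op (ix * star W) • δ x := by
    intro x ix hx1
    have hpair : (W * star ix) * star x = W := by
      rw [mul_assoc, ← star_mul, hx1, star_one, mul_one]
    have h := congrArg star (hδ (W * star ix) x hpair)
    rw [star_add, hstar_left, hstar_right, star_star, star_star, star_mul, star_star] at h
    rw [h, add_comm]
  -- invertibility of (n : A) - a for n > ‖a‖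
  have isUnitSub : ∀ (a : A) (n : ℕ), ‖a‖ < n → IsUnit ((n:A) - a) := by
    intro a n hn
    have hn0 : (0:ℝ) < n := lt_of_le_of_lt (norm_nonneg a) hn
    have hnc : ((n:ℕ):ℂ) ≠ 0 := by
      simp only [ne_eq, Nat.cast_eq_zero]
      intro h; rw [h] at hn0; simp at hn0
    have hfac : ((n:A) - a) = (n:A) * (1 - (n:ℂ)⁻¹ • a) := by
      rw [mul_sub, mul_one, mul_smul_comm, ← natSmulA, smul_smul,
        inv_mul_cancel₀ hnc, one_smul]
    rw [hfac]
    have h1 : IsUnit ((n:A)) := by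
      rw [← map_natCast (algebraMap ℂ A) n]
      exact (IsUnit.mk0 _ hnc).map (algebraMap ℂ A)
    have h2 : IsUnit (1 - (n:ℂ)⁻¹ • a) := by
      apply isUnit_one_sub_of_norm_lt_one
      rw [norm_smul, norm_inv, Complex.norm_natCast]
      rw [inv_mul_lt_iff₀ hn0, mul_one]
      exact hn
    exact h1.mul h2
  have opCancel : ∀ (c ic : A), ic * c = 1 → ∀ m1 m2 : M, op ic • m1 = op ic • m2 → m1 = m2 := by
    intro c ic hic m1 m2 h
    have h2 := congrArg (fun m => op c • m) h
    rwa [← mul_smul, ← mul_smul, ← op_mul, hic, op_one, one_smul, one_smul] at h2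
  -- ## the key computation (family II* with partial fractions)
  have CLUB : ∀ (x ix : A), x * ix = 1 → ix * x = 1 → ∀ (k : ℕ) (iv : A),
      ((k:A) - x) * iv = 1 → iv * ((k:A) - x) = 1 →
      op ix • (x • δ x) + op iv • (x • δ x) + (k:ℂ) • (op iv • δ x)
        - op ix • δ (x*x) - op iv • δ (x*x) = 0 := by
    intro x ix hx1 hx2 k iv hv1 hv2
    set v : A := (k:A) - x with hv
    set w : A := v * x with hwdef
    set iw : A := ix * iv with hiwdef
    have hcomm : x * v = v * x := by
      rw [hv, mul_sub, sub_mul, (Nat.cast_commute k x).eq]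
    have hw1 : w * iw = 1 := by
      calc (v * x) * (ix * iv) = v * ((x * ix) * iv) := by rw [mul_assoc, mul_assoc]
      _ = v * iv := by rw [hx1, one_mul]
      _ = 1 := hv1
    have hw2 : iw * w = 1 := by
      calc (ix * iv) * (v * x) = ix * ((iv * v) * x) := by rw [mul_assoc, mul_assoc]
      _ = ix * x := by rw [hv2, one_mul]
      _ = 1 := hx2
    have hxv1 : (x * v) * (iv * ix) = 1 := by
      calc (x * v) * (iv * ix) = x * ((v * iv) * ix) := by rw [mul_assoc, mul_assoc]
      _ = x * ix := by rw [hv1, one_mul]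
      _ = 1 := hx1
    have hivix : ix * iv = iv * ix := by
      calc ix * iv = (ix * iv) * ((x * v) * (iv * ix)) := by rw [hxv1, mul_one]
      _ = ((ix * iv) * (v * x)) * (iv * ix) := by rw [hcomm]; simp only [mul_assoc]
      _ = iv * ix := by rw [hw2, one_mul]
    have pf : (k:ℂ) • iw = ix + iv := by
      rw [natSmulA]
      have hk : (k:A) = v + x := by rw [hv, sub_add_cancel]
      rw [hk, add_mul, hiwdef, hivix]
      calc v * (iv * ix) + x * (iv * ix) = (v * iv) * ix + x * (iv * ix) := by rw [mul_assoc]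
      _ = ix + x * (ix * iv) := by rw [hv1, one_mul, hivix]
      _ = ix + (x * ix) * iv := by rw [mul_assoc]
      _ = ix + iv := by rw [hx1, one_mul]
    -- the three instances
    set Z : M := star (δ W) with hZ
    set WS : A := star W with hWS
    set X : M := star (δ (W * star ix)) with hX
    set Y : M := star (δ (W * star iv)) with hY
    set DW : M := star (δ (W * star iw)) with hDW
    set dx : M := δ x with hdx
    set d2 : M := δ (x*x) with hd2
    have Ex : Z = x • X + op (ix * WS) • dx := EII x ix hx1
    have Ev0 : Z = v • Y + op (iv * WS) • δ v := EII v iv hv1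
    have hδv : δ v = -dx := by
      rw [hv, map_sub, hδnat, zero_sub, hdx]
    have Ew : Z = w • DW + op (iw * WS) • δ w := EII w iw hw1
    have hδw : δ w = (k:ℂ) • dx - d2 := by
      have hw3 : w = (k:ℂ) • x - x * x := by
        rw [hwdef, hv, sub_mul, natSmulA]
      rw [hw3, map_sub, map_smul]
    -- key1 : (k:ℂ) • DW = X + Y
    have key1 : (k:ℂ) • DW = X + Y := by
      rw [hDW, ← starNatM, ← map_smul, ← mul_smul_comm, ← starNatA, pf, star_add,
        mul_add, map_add, star_add]
    -- abbreviations
    set B1 : M := op (ix * WS) • dx with hB1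
    set B2 : M := op (iv * WS) • dx with hB2
    set C1 : M := op (ix * WS) • d2 with hC1
    set C2 : M := op (iv * WS) • d2 with hC2
    have hvZ : ∀ m : M, v • m = (k:ℂ) • m - x • m := by
      intro m; rw [hv, sub_smul, natSmulM]
    have hxX : x • X = Z - B1 := by rw [Ex]; abel
    have hvY : v • Y = Z + B2 := by
      rw [hδv, smul_neg] at Ev0
      rw [Ev0, hB2]; abel
    have hwX2 : w • X = ((k:ℂ) • Z - x • Z) - ((k:ℂ) • B1 - x • B1) := by
      calc w • X = v • (x • X) := by rw [hwdef, mul_smul]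
      _ = v • Z - v • B1 := by rw [hxX, smul_sub]
      _ = ((k:ℂ) • Z - x • Z) - ((k:ℂ) • B1 - x • B1) := by rw [hvZ, hvZ]
    have hwY : w • Y = x • Z + x • B2 := by
      calc w • Y = x • (v • Y) := by rw [hwdef, ← hcomm, mul_smul]
      _ = x • Z + x • B2 := by rw [hvY, smul_add]
    have hdw1 : op (ix * WS) • δ w = (k:ℂ) • B1 - C1 := by
      rw [hδw, smul_sub, scommOp, hB1, hC1]
    have hdw2 : op (iv * WS) • δ w = (k:ℂ) • B2 - C2 := by
      rw [hδw, smul_sub, scommOp, hB2, hC2]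
    have hEw' : (k:ℂ) • Z = w • X + w • Y + op (ix * WS) • δ w + op (iv * WS) • δ w := by
      calc (k:ℂ) • Z = (k:ℂ) • (w • DW) + (k:ℂ) • (op (iw * WS) • δ w) := by
            rw [← smul_add, ← Ew]
      _ = w • ((k:ℂ) • DW) + ((k:ℂ) • op (iw * WS)) • δ w := by
            rw [scommA, smul_assoc]
      _ = w • (X + Y) + (op ((k:ℂ) • (iw * WS))) • δ w := by rw [key1, op_smul]
      _ = w • X + w • Y + (op (((k:ℂ) • iw) * WS)) • δ w := by rw [smul_add, smul_mul_assoc]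
      _ = w • X + w • Y + (op (ix * WS + iv * WS)) • δ w := by rw [pf, add_mul]
      _ = w • X + w • Y + op (ix * WS) • δ w + op (iv * WS) • δ w := by
            rw [op_add, add_smul]; abel
    have final : x • B1 + x • B2 + (k:ℂ) • B2 - C1 - C2 = 0 := by
      have h5 : (k:ℂ) • Z = (((k:ℂ) • Z - x • Z) - ((k:ℂ) • B1 - x • B1))
          + (x • Z + x • B2) + ((k:ℂ) • B1 - C1) + ((k:ℂ) • B2 - C2) := by
        have h5' := hEw'
        rw [hwX2, hwY, hdw1, hdw2] at h5'
        exact h5'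
      calc x • B1 + x • B2 + (k:ℂ) • B2 - C1 - C2
          = ((((k:ℂ) • Z - x • Z) - ((k:ℂ) • B1 - x • B1))
            + (x • Z + x • B2) + ((k:ℂ) • B1 - C1) + ((k:ℂ) • B2 - C2)) - (k:ℂ) • Z := by
            abel
      _ = (k:ℂ) • Z - (k:ℂ) • Z := by rw [← h5]
      _ = 0 := sub_self _
    -- move W to the outside and kill it
    have hb : op WS • (op ix • (x • dx) + op iv • (x • dx) + (k:ℂ) • (op iv • dx)
        - op ix • d2 - op iv • d2) = x • B1 + x • B2 + (k:ℂ) • B2 - C1 - C2 := by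
      have e1 : op WS • (op ix • (x • dx)) = x • B1 := by
        rw [← mul_smul, ← op_mul, hB1]
        exact (smul_comm x (op (ix * WS)) dx).symm
      have e2 : op WS • (op iv • (x • dx)) = x • B2 := by
        rw [← mul_smul, ← op_mul, hB2]
        exact (smul_comm x (op (iv * WS)) dx).symm
      have e3 : op WS • ((k:ℂ) • (op iv • dx)) = (k:ℂ) • B2 := by
        rw [scommOp, ← mul_smul, ← op_mul, hB2]
      have e4 : op WS • (op ix • d2) = C1 := by rw [← mul_smul, ← op_mul, hC1]
      have e5 : op WS • (op iv • d2) = C2 := by rw [← mul_smul, ← op_mul, hC2]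
      rw [smul_sub, smul_sub, smul_add, smul_add, e1, e2, e3, e4, e5]
    apply kill
    rw [hb, final]
  -- ## Jordan property at units
  have JU : ∀ x ix : A, x * ix = 1 → ix * x = 1 → δ (x*x) = op x • δ x + x • δ x := by
    intro x ix hx1 hx2
    obtain ⟨n, hn⟩ := exists_nat_gt ‖x‖
    have hn' : ‖x‖ < (n+1:ℕ) := by
      push_cast
      linarith
    obtain ⟨v1u, hv1u⟩ := isUnitSub x n hn
    obtain ⟨v2u, hv2u⟩ := isUnitSub x (n+1) hn'
    set iv : A := ((v1u⁻¹ : Aˣ) : A) with hiv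
    set iv' : A := ((v2u⁻¹ : Aˣ) : A) with hiv'
    have hv1a : ((n:A) - x) * iv = 1 := by rw [← hv1u, hiv, Units.mul_inv]
    have hv1b : iv * ((n:A) - x) = 1 := by rw [← hv1u, hiv, Units.inv_mul]
    have hv2a : (((n+1:ℕ):A) - x) * iv' = 1 := by rw [← hv2u, hiv', Units.mul_inv]
    have hv2b : iv' * (((n+1:ℕ):A) - x) = 1 := by rw [← hv2u, hiv', Units.inv_mul]
    have e1 := CLUB x ix hx1 hx2 n iv hv1a hv1b
    have e2 := CLUB x ix hx1 hx2 (n+1) iv' hv2a hv2b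
    set dx : M := δ x with hdx
    set d2 : M := δ (x*x) with hd2
    have hcast : (((n+1:ℕ)):ℂ) • (op iv' • dx) = (n:ℂ) • (op iv' • dx) + op iv' • dx := by
      push_cast
      rw [add_smul, one_smul]
    rw [hcast] at e2
    set P : M := x • dx + (n:ℂ) • dx - d2 with hP
    have hA : op iv • P = op iv • (x • dx) + (n:ℂ) • (op iv • dx) - op iv • d2 := by
      rw [hP, smul_sub, smul_add, scommOp]
    have hB : op iv' • P = op iv' • (x • dx) + (n:ℂ) • (op iv' • dx) - op iv' • d2 := by
      rw [hP, smul_sub, smul_add, scommOp]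
    have hdiff : iv - iv' = iv * iv' := by
      have hd : (((n+1:ℕ):A) - x) - ((n:A) - x) = 1 := by push_cast; abel
      calc iv - iv'
          = iv * ((((n+1:ℕ):A) - x) * iv') - (iv * ((n:A) - x)) * iv' := by
            rw [hv2a, hv1b, mul_one, one_mul]
      _ = iv * ((((n+1:ℕ):A) - x) * iv') - iv * (((n:A) - x) * iv') := by rw [mul_assoc]
      _ = iv * (((((n+1:ℕ):A) - x) - ((n:A) - x)) * iv') := by rw [← mul_sub, ← sub_mul]
      _ = iv * (1 * iv') := by rw [hd]
      _ = iv * iv' := by rw [one_mul]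
    have hstep : op iv' • (op iv • P) = op iv' • dx := by
      have h7 : op iv • P - op iv' • P = op iv' • dx := by
        calc op iv • P - op iv' • P
            = (op iv • (x • dx) + (n:ℂ) • (op iv • dx) - op iv • d2)
              - (op iv' • (x • dx) + (n:ℂ) • (op iv' • dx) - op iv' • d2) := by rw [hA, hB]
        _ = (op ix • (x • dx) + op iv • (x • dx) + (n:ℂ) • (op iv • dx)
              - op ix • d2 - op iv • d2)
            - (op ix • (x • dx) + op iv' • (x • dx)
              + ((n:ℂ) • (op iv' • dx) + op iv' • dx) - op ix • d2 - op iv' • d2)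
            + op iv' • dx := by abel
        _ = 0 - 0 + op iv' • dx := by rw [e1, e2]
        _ = op iv' • dx := by abel
      calc op iv' • (op iv • P) = op (iv * iv') • P := by rw [← mul_smul, ← op_mul]
      _ = op (iv - iv') • P := by rw [← hdiff]
      _ = op iv • P - op iv' • P := by rw [op_sub, sub_smul]
      _ = op iv' • dx := h7
    have hgoal1 : op iv • P = dx :=
      opCancel _ _ hv2b _ _ hstep
    have h8 : op ix • (x • dx) - op ix • d2 + dx = 0 := by
      calc op ix • (x • dx) - op ix • d2 + dx
          = (op ix • (x • dx) + op iv • (x • dx) + (n:ℂ) • (op iv • dx)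
              - op ix • d2 - op iv • d2)
            - (op iv • (x • dx) + (n:ℂ) • (op iv • dx) - op iv • d2) + dx := by abel
      _ = 0 - op iv • P + dx := by rw [e1, ← hA]
      _ = 0 - dx + dx := by rw [hgoal1]
      _ = 0 := by abel
    have h9 : op ix • (x • dx - d2) = -dx := by
      rw [smul_sub]
      calc op ix • (x • dx) - op ix • d2
          = (op ix • (x • dx) - op ix • d2 + dx) - dx := by abel
      _ = 0 - dx := by rw [h8]
      _ = -dx := by abel
    have h10 := congrArg (fun m => op x • m) h9
    rw [← mul_smul, ← op_mul, hx2, op_one, one_smul, smul_neg] at h10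
    -- h10 : x • dx - d2 = -(op x • dx)
    have h11 : d2 = op x • dx + x • dx := by
      calc d2 = x • dx - (x • dx - d2) := by abel
      _ = x • dx - (-(op x • dx)) := by rw [h10]
      _ = op x • dx + x • dx := by abel
    exact h11
  -- ## Jordan property everywhere
  have hJor : ∀ a : A, δ (a*a) = op a • δ a + a • δ a := by
    intro a
    obtain ⟨n, hn⟩ := exists_nat_gt ‖a‖
    obtain ⟨xu, hxu⟩ := isUnitSub a n hn
    set x : A := (n:A) - a with hx
    have h := JU x ((xu⁻¹ : Aˣ) : A) (by rw [← hxu, Units.mul_inv]) (by rw [← hxu, Units.inv_mul])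
    have hδx : δ x = -δ a := by rw [hx, map_sub, hδnat, zero_sub]
    have hxx : x * x = (n:A) * (n:A) - (n:A) * a - a * (n:A) + a * a := by
      rw [hx]; noncomm_ring
    have c1 : δ ((n:A) * (n:A)) = 0 := by rw [← natSmulA, map_smul, hδnat, smul_zero]
    have c2 : δ ((n:A) * a) = (n:ℂ) • δ a := by rw [← natSmulA, map_smul]
    have c3 : δ (a * (n:A)) = (n:ℂ) • δ a := by
      rw [← (Nat.cast_commute n a).eq, ← natSmulA, map_smul]
    have hLHS : δ (x*x) = δ (a*a) - (n:ℂ) • δ a - (n:ℂ) • δ a := by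
      rw [hxx, map_add, map_sub, map_sub, c1, c2, c3]; abel
    have hR1 : x • δ x = a • δ a - (n:ℂ) • δ a := by
      rw [hδx, smul_neg, hx, sub_smul, natSmulM, neg_sub]
    have hR2 : op x • δ x = op a • δ a - (n:ℂ) • δ a := by
      rw [hδx, smul_neg, hx, op_sub, sub_smul, natSmulOp, neg_sub]
    rw [hLHS, hR1, hR2] at h
    calc δ (a*a) = (δ (a*a) - (n:ℂ) • δ a - (n:ℂ) • δ a) + (n:ℂ) • δ a + (n:ℂ) • δ a := by
          abel
    _ = ((op a • δ a - (n:ℂ) • δ a) + (a • δ a - (n:ℂ) • δ a)) + (n:ℂ) • δ a + (n:ℂ) • δ a := by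
          rw [h]
    _ = op a • δ a + a • δ a := by abel
  have hder : ∀ a b : A, δ (a * b) = op b • δ a + a • δ b := hJD δ hJor
  -- ## star property at units
  have hstarU : ∀ x ix : A, x * ix = 1 → ix * x = 1 → δ (star x) = star (δ x) := by
    intro x ix hx1 hx2
    have hpair : (W * ix) * star (star x) = W := by
      rw [star_star, mul_assoc, hx2, mul_one]
    have h := hδ (W * ix) (star x) hpair
    rw [star_star] at h
    -- δ W = (W*ix) • star (δ (star x)) + op x • δ (W*ix)
    have hWix : δ (W * ix) = op ix • δ W + W • δ ix := hder W ix
    have hδix : x • δ ix = -(op ix • δ x) := by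
      have h0 : δ (x * ix) = op ix • δ x + x • δ ix := hder x ix
      rw [hx1, hδ1] at h0
      have := h0.symm
      calc x • δ ix = (op ix • δ x + x • δ ix) - op ix • δ x := by abel
      _ = 0 - op ix • δ x := by rw [← this]
      _ = -(op ix • δ x) := by abel
    have hδix2 : δ ix = -(ix • (op ix • δ x)) := by
      calc δ ix = ix • (x • δ ix) := by rw [← mul_smul, hx2, one_smul]
      _ = ix • (-(op ix • δ x)) := by rw [hδix]
      _ = -(ix • (op ix • δ x)) := by rw [smul_neg]
    have hterm : op x • δ (W * ix) = δ W - W • (ix • δ x) := by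
      rw [hWix, smul_add, ← mul_smul, ← op_mul, hx2, op_one, one_smul, sub_eq_add_neg]
      congr 1
      calc op x • (W • δ ix) = W • (op x • δ ix) := (smul_comm W (op x) (δ ix)).symm
      _ = W • (op x • (-(ix • (op ix • δ x)))) := by rw [hδix2]
      _ = W • (-(op x • (ix • (op ix • δ x)))) := by rw [smul_neg]
      _ = W • (-(ix • (op x • (op ix • δ x)))) := by
            rw [show (op x) • (ix • ((op ix) • δ x)) = ix • ((op x) • ((op ix) • δ x)) from
              (smul_comm ix (op x) _).symm]
      _ = W • (-(ix • (op (ix * x) • δ x))) := by rw [← mul_smul, ← op_mul]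
      _ = -(W • (ix • δ x)) := by rw [hx2, op_one, one_smul, smul_neg]
    rw [hterm] at h
    -- h : δ W = (W*ix) • star (δ (star x)) + (δ W - W • (ix • δ x))
    have h0 : W • (ix • (star (δ (star x)) - δ x)) = 0 := by
      have h2 : (W * ix) • star (δ (star x)) - W • (ix • δ x) = 0 := by
        calc (W * ix) • star (δ (star x)) - W • (ix • δ x)
            = ((W * ix) • star (δ (star x)) + (δ W - W • (ix • δ x))) - δ W := by abel
        _ = δ W - δ W := by rw [← h]
        _ = 0 := sub_self _
      rw [smul_sub, smul_sub, ← mul_smul]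
      exact h2
    have h1 := hW _ h0
    have h2 : star (δ (star x)) - δ x = 0 := by
      have h3 := congrArg (fun m => x • m) h1
      simp only [smul_zero] at h3
      rwa [← mul_smul, hx1, one_smul] at h3
    have h4 : star (δ (star x)) = δ x := by
      calc star (δ (star x)) = (star (δ (star x)) - δ x) + δ x := by abel
      _ = 0 + δ x := by rw [h2]
      _ = δ x := by rw [zero_add]
    calc δ (star x) = star (star (δ (star x))) := (star_star _).symm
    _ = star (δ x) := by rw [h4]
  -- ## star property everywhere
  have hstars : ∀ a : A, δ (star a) = star (δ a) := by
    intro a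
    obtain ⟨n, hn⟩ := exists_nat_gt ‖a‖
    obtain ⟨xu, hxu⟩ := isUnitSub a n hn
    set x : A := (n:A) - a with hx
    have h := hstarU x ((xu⁻¹ : Aˣ) : A) (by rw [← hxu, Units.mul_inv])
      (by rw [← hxu, Units.inv_mul])
    have hsx : star x = (n:A) - star a := by rw [hx, star_sub, star_natCast]
    have hL : δ (star x) = -δ (star a) := by rw [hsx, map_sub, hδnat, zero_sub]
    have hR : star (δ x) = -star (δ a) := by
      rw [hx, map_sub, hδnat, zero_sub, star_neg]
    rw [hL, hR] at h
    exact neg_injective h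
  exact ⟨hder, hstars⟩
end

section
/- Let W be a right separating point of M. If δ : A → M is linear with δ(I) = 0 and satisfies δ(W) = Aδ(B)* + δ(A)B* whenever AB* = W, then δ is a Jordan derivation. -/
open MulOpposite

/-!
Applied to the factorisation `W = u (u⁻¹ W)` of a unit `u`, the hypothesis reads
`u T(u⁻¹) = δ(W) - δ(u) u⁻¹ W`, where `T x = δ((x W)*)*` is additive.
If `u` and `u + 1` are units, then `(u (u + 1))⁻¹ = u⁻¹ - (u + 1)⁻¹`, so additivity of `T`
and separation by `W` compute `δ(u (u + 1))`, which is the Jordan identity at `u` because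
`δ(1) = 0`. Every `a` is a scalar shift `u - s` of such a unit (take `s > ‖a‖`), and scalar
shifts do not affect the Jordan identity.
-/

theorem Units.val_inv_mul_of_val_eq_add_one {A : Type*} [Ring A] {u u' : Aˣ}
    (h : (u' : A) = u + 1) : (↑(u * u')⁻¹ : A) = ↑u⁻¹ - ↑u'⁻¹ := by
  have hcomm : u * u' = u' * u := Units.ext <| by simp [h, mul_add, add_mul]
  calc (↑(u * u')⁻¹ : A) = ↑u⁻¹ * (↑u' - ↑u) * ↑u'⁻¹ := by
        rw [h, add_sub_cancel_left, mul_one, hcomm, mul_inv_rev, Units.val_mul]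
    _ = ↑u⁻¹ - ↑u'⁻¹ := by
        rw [mul_sub, sub_mul, mul_assoc, Units.mul_inv, mul_one, Units.inv_mul, one_mul]

theorem isUnit_algebraMap_add_of_norm_mul_lt {𝕜 A : Type*} [NormedField 𝕜] [NormedRing A]
    [NormedAlgebra 𝕜 A] [CompleteSpace A] {a : A} {k : 𝕜} (h : ‖a‖ * ‖(1 : A)‖ < ‖k‖) :
    IsUnit (algebraMap 𝕜 A k + a) := by
  simpa only [sub_neg_eq_add] using spectrum.mem_resolventSet_iff.mp
    (spectrum.mem_resolventSet_of_norm_lt_mul (a := -a) (by rwa [norm_neg]))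

theorem map_mul_self_algebraMap_add_iff {R A M : Type*} [CommRing R] [Ring A] [Algebra R A]
    [AddCommGroup M] [Module R M] [Module A M] [Module Aᵐᵒᵖ M] [IsScalarTower R A M]
    [IsScalarTower R Aᵐᵒᵖ M] {δ : A →ₗ[R] M} (hI : δ 1 = 0) (c : R) (a : A) :
    δ ((algebraMap R A c + a) * (algebraMap R A c + a)) =
        op (algebraMap R A c + a) • δ (algebraMap R A c + a) +
          (algebraMap R A c + a) • δ (algebraMap R A c + a) ↔
      δ (a * a) = op a • δ a + a • δ a := by
  have hδc : δ (algebraMap R A c) = 0 := by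
    rw [Algebra.algebraMap_eq_smul_one, map_smul, hI, smul_zero]
  have hsq : δ ((algebraMap R A c + a) * (algebraMap R A c + a)) =
      (c • δ a + c • δ a) + δ (a * a) := by
    rw [add_mul, mul_add, mul_add, ← Algebra.commutes c a, ← map_mul, ← Algebra.smul_def]
    simp only [map_add, map_smul, Algebra.algebraMap_eq_smul_one, hI, smul_zero, zero_add]
    abel
  have hop : op (algebraMap R A c) • δ a = c • δ a := by
    rw [← MulOpposite.algebraMap_apply, algebraMap_smul]
  rw [hsq, map_add, hδc, zero_add, op_add, add_smul, add_smul, hop, algebraMap_smul,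
    add_add_add_comm, add_right_inj]

section

variable {A M F : Type*} [Ring A] [StarRing A] [AddCommGroup M] [StarAddMonoid M]
  [Module A M] [Module Aᵐᵒᵖ M] [FunLike F A M]

theorem smul_star_map_star_inv_mul {W : A} {δ : F}
    (hδ : ∀ a b : A, a * star b = W → δ W = a • star (δ b) + op (star b) • δ a) (u : Aˣ) :
    (u : A) • star (δ (star (↑u⁻¹ * W))) = δ W - op W • op (↑u⁻¹ : A) • δ u := by
  rw [hδ u (star (↑u⁻¹ * W)) (by rw [star_star, Units.mul_inv_cancel_left]), star_star, op_mul,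
    mul_smul, add_sub_cancel_right]

variable [SMulCommClass A Aᵐᵒᵖ M] [AddMonoidHomClass F A M]

theorem map_units_mul_of_val_eq_add_one {W : A} (hW : ∀ m : M, op W • m = 0 → m = 0) {δ : F}
    (hδ : ∀ a b : A, a * star b = W → δ W = a • star (δ b) + op (star b) • δ a)
    {u u' : Aˣ} (h : (u' : A) = u + 1) :
    δ (u * u' : A) = op (u' : A) • (u' : A) • δ u - op (u : A) • (u : A) • δ u' := by
  set T : A → M := fun x ↦ star (δ (star (x * W)))
  have hT : ∀ x y, T (x - y) = T x - T y := fun x y ↦ by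
    simp only [T, sub_mul, star_sub, map_sub]
  have hcomm : (u : A) * u' = u' * u := by rw [h, mul_add, add_mul, mul_one, one_mul]
  have hsep : op (↑(u * u')⁻¹ : A) • δ (u * u' : A) =
      op (↑u⁻¹ : A) • (u' : A) • δ u - op (↑u'⁻¹ : A) • (u : A) • δ u' := by
    refine sub_eq_zero.mp (hW _ ?_)
    rw [smul_sub, sub_eq_zero]
    calc op W • op (↑(u * u')⁻¹ : A) • δ (u * u' : A)
        = δ W - (u * u' : A) • T ↑(u * u')⁻¹ := by
          rw [← Units.val_mul, smul_star_map_star_inv_mul hδ, sub_sub_cancel]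
      _ = δ W - ((u' : A) • (u : A) • T ↑u⁻¹ - (u : A) • (u' : A) • T ↑u'⁻¹) := by
          rw [Units.val_inv_mul_of_val_eq_add_one h, hT, smul_sub, hcomm, mul_smul, ← hcomm,
            mul_smul]
      _ = δ W - ((u' : A) • (δ W - op W • op (↑u⁻¹ : A) • δ u)
            - (u : A) • (δ W - op W • op (↑u'⁻¹ : A) • δ u')) := by
          rw [smul_star_map_star_inv_mul hδ, smul_star_map_star_inv_mul hδ]
      _ = op W • (op (↑u⁻¹ : A) • (u' : A) • δ u - op (↑u'⁻¹ : A) • (u : A) • δ u') := by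
          simp only [smul_sub, smul_comm (u' : A) (op _ : Aᵐᵒᵖ), smul_comm (u : A) (op _ : Aᵐᵒᵖ)]
          rw [h]
          simp only [add_smul, one_smul, smul_add]
          abel
  have hop : ∀ (x y : A) (m : M), op x • op y • m = op (y * x) • m := fun x y m ↦ by
    rw [op_mul, mul_smul]
  calc δ (u * u' : A) = op (u * u' : A) • op (↑(u * u')⁻¹ : A) • δ (u * u' : A) := by
        rw [hop, ← Units.val_mul, Units.inv_mul, op_one, one_smul]
    _ = op (u' : A) • (u' : A) • δ u - op (u : A) • (u : A) • δ u' := by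
        rw [hsep, smul_sub, hop, hop, Units.inv_mul_cancel_left, hcomm,
          Units.inv_mul_cancel_left]

theorem map_mul_self_of_isUnit_of_isUnit_add_one {W : A} (hW : ∀ m : M, op W • m = 0 → m = 0)
    {δ : F} (hI : δ 1 = 0)
    (hδ : ∀ a b : A, a * star b = W → δ W = a • star (δ b) + op (star b) • δ a)
    {a : A} (ha : IsUnit a) (ha1 : IsUnit (a + 1)) :
    δ (a * a) = op a • δ a + a • δ a := by
  obtain ⟨u, rfl⟩ := ha
  obtain ⟨u', hu'⟩ := ha1
  have hδu' : δ u' = δ u := by rw [hu', map_add, hI, add_zero]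
  have key := map_units_mul_of_val_eq_add_one hW hδ hu'
  rw [hδu', hu', mul_add, mul_one, map_add, op_add, op_one] at key
  refine add_right_cancel (key.trans ?_)
  simp only [add_smul, one_smul, smul_add]
  abel

end

theorem stmt6_general {A : Type*} {M : Type*}
    [NormedRing A] [NormedAlgebra ℂ A] [CompleteSpace A] [StarRing A]
    [AddCommGroup M] [Module ℂ M] [Module A M] [Module Aᵐᵒᵖ M]
    [SMulCommClass A Aᵐᵒᵖ M] [IsScalarTower ℂ A M] [IsScalarTower ℂ Aᵐᵒᵖ M]
    [StarAddMonoid M]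
    (W : A) (hW : ∀ m : M, op W • m = 0 → m = 0)
    (δ : A →ₗ[ℂ] M) (hI : δ 1 = 0)
    (hδ : ∀ a b : A, a * star b = W → δ W = a • star (δ b) + op (star b) • δ a) :
    ∀ a : A, δ (a * a) = op a • δ a + a • δ a := by
  intro a
  set s : ℝ := ‖a‖ * ‖(1 : A)‖ + 1
  have hs : ∀ t : ℝ, 0 ≤ t → ‖a‖ * ‖(1 : A)‖ < ‖((s + t : ℝ) : ℂ)‖ := fun t ht ↦ by
    rw [Complex.norm_real, Real.norm_of_nonneg (by positivity)]
    linarith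
  have hu : IsUnit (algebraMap ℂ A s + a) := by
    simpa using isUnit_algebraMap_add_of_norm_mul_lt (hs 0 le_rfl)
  have hu1 : IsUnit (algebraMap ℂ A s + a + 1) := by
    simpa [add_right_comm] using isUnit_algebraMap_add_of_norm_mul_lt (hs 1 zero_le_one)
  exact (map_mul_self_algebraMap_add_iff hI (s : ℂ) a).mp
    (map_mul_self_of_isUnit_of_isUnit_add_one hW hI hδ hu hu1)

/-- If `W` is a right separating point of `M`, `δ(I) = 0`, and
`δ(W) = A δ(B)* + δ(A) B*` whenever `A B* = W`, then `δ` is a Jordan derivation. -/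
theorem stmt6 {A : Type*} {M : Type*}
    [NormedRing A] [NormedAlgebra ℂ A] [CompleteSpace A] [StarRing A]
    [AddCommGroup M] [Module ℂ M] [Module A M] [Module Aᵐᵒᵖ M]
    [SMulCommClass A Aᵐᵒᵖ M] [IsScalarTower ℂ A M] [IsScalarTower ℂ Aᵐᵒᵖ M]
    [StarAddMonoid M]
    (hstar_left : ∀ (a : A) (m : M), star (a • m) = op (star a) • star m)
    (hstar_right : ∀ (a : A) (m : M), star (op a • m) = star a • star m)
    (W : A) (hW : ∀ m : M, op W • m = 0 → m = 0)
    (δ : A →ₗ[ℂ] M) (hI : δ 1 = 0)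
    (hδ : ∀ a b : A, a * star b = W → δ W = a • star (δ b) + op (star b) • δ a) :
    ∀ a : A, δ (a * a) = op a • δ a + a • δ a :=
  stmt6_general W hW δ hI hδ
end

section
/- Let A be a unital Banach algebra, M a unital left A-module, and δ : A → M linear. If Aδ(A⁻¹) + A⁻¹δ(A) = δ(I) for every invertible A ∈ A, then δ is a Jordan left derivation, i.e., δ(A²) = 2Aδ(A) for all A ∈ A. -/
/-!
The hypothesis at `u = 1` gives `δ 1 = 0`, after which it says `δ u⁻¹ = -u⁻² δ u` for every
unit `u`. If `x` and `x + 1` are both units, they commute and satisfy the resolvent identity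
`(x (x + 1))⁻¹ = x⁻¹ - (x + 1)⁻¹`; evaluating `δ` on both sides with the inverse formula gives
`δ (x (x + 1)) = ((x + 1)² - x²) δ x`, i.e. `δ (x²) = 2 x δ x`. For arbitrary `a`, the spectrum of
`a` is bounded, so some scalar `c` has `c - a` and `c + 1 - a` invertible; since `δ` vanishes on
scalars, the identity for `x = c - a` is the identity for `a`.
-/

open Filter Bornology

section UnitsIdentity

variable {R M : Type*} [Ring R] [AddCommGroup M] [Module R M]

theorem map_one_eq_zero_of_units_identity {δ : R → M}
    (h : ∀ u : Rˣ, (u : R) • δ ↑u⁻¹ + (↑u⁻¹ : R) • δ u = δ 1) : δ 1 = 0 := by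
  simpa using h 1

theorem map_units_inv_of_units_identity {δ : R → M}
    (h : ∀ u : Rˣ, (u : R) • δ ↑u⁻¹ + (↑u⁻¹ : R) • δ u = δ 1) (u : Rˣ) :
    δ ↑u⁻¹ = -(u⁻¹ ^ 2 • δ u) := by
  have hu := congrArg (u⁻¹ • ·) (h u)
  simp only [smul_add, ← Units.smul_def, smul_smul, inv_mul_cancel, one_smul, smul_zero,
    map_one_eq_zero_of_units_identity h, ← sq] at hu
  exact eq_neg_of_add_eq_zero_left hu

theorem Units.val_inv_mul_of_val_eq_add_one_s7 {u v : Rˣ} (hv : (v : R) = u + 1) :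
    (↑(u * v)⁻¹ : R) = ↑u⁻¹ - ↑v⁻¹ :=
  calc (↑(u * v)⁻¹ : R) = ↑v⁻¹ * ((v - u : R) * ↑u⁻¹) := by simp [hv]
    _ = ↑u⁻¹ - ↑v⁻¹ := by
      rw [sub_mul, mul_sub, Units.mul_inv, ← mul_assoc, Units.inv_mul, one_mul, mul_one]

theorem map_mul_self_of_units_identity {F : Type*} [FunLike F R M] [AddMonoidHomClass F R M]
    {δ : F} (h : ∀ u : Rˣ, (u : R) • δ ↑u⁻¹ + (↑u⁻¹ : R) • δ u = δ 1) {x : R} (hx : IsUnit x)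
    (hx1 : IsUnit (x + 1)) : δ (x * x) = (2 * x) • δ x := by
  obtain ⟨u, rfl⟩ := hx
  obtain ⟨v, hv⟩ := hx1
  have hδv : δ v = δ u := by rw [hv, map_add, map_one_eq_zero_of_units_identity h, add_zero]
  have hcomm : Commute u v := Units.ext (by simp [hv, mul_add, add_mul])
  have hδuv : δ ↑(u * v) = v ^ 2 • δ u - u ^ 2 • δ u := by
    have := map_units_inv_of_units_identity h (u * v)⁻¹
    rw [inv_inv, Units.val_inv_mul_of_val_eq_add_one_s7 hv, map_sub,
      map_units_inv_of_units_identity h, map_units_inv_of_units_identity h, hδv] at this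
    rw [this, smul_sub, smul_neg, smul_neg, smul_smul, smul_smul, hcomm.mul_pow, inv_pow, inv_pow,
      mul_inv_cancel_right, (hcomm.pow_pow 2 2).eq, mul_inv_cancel_right]
    abel
  calc δ (u * u) = δ ↑(u * v) - δ u := by
        rw [Units.val_mul, hv, mul_add, mul_one, map_add, add_sub_cancel_right]
    _ = ((v : R) ^ 2 - (u : R) ^ 2 - 1) • δ u := by
        rw [hδuv, Units.smul_def, Units.smul_def, sub_smul, sub_smul, one_smul,
          Units.val_pow_eq_pow_val, Units.val_pow_eq_pow_val]
    _ = (2 * u : R) • δ u := by rw [hv]; congr 1; noncomm_ring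

end UnitsIdentity

theorem map_mul_self_of_notMem_spectrum {𝕜 R M : Type*} [CommRing 𝕜] [Ring R] [Algebra 𝕜 R]
    [AddCommGroup M] [Module 𝕜 M] [Module R M] [IsScalarTower 𝕜 R M] {δ : R →ₗ[𝕜] M}
    (h : ∀ u : Rˣ, (u : R) • δ ↑u⁻¹ + (↑u⁻¹ : R) • δ u = δ 1) {a : R} {c : 𝕜}
    (hc : c ∉ spectrum 𝕜 a) (hc1 : c + 1 ∉ spectrum 𝕜 a) :
    δ (a * a) = (2 : 𝕜) • (a • δ a) := by
  set x := algebraMap 𝕜 R c - a with hx_def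
  have hx : IsUnit x := spectrum.notMem_iff.mp hc
  have hx1 : IsUnit (x + 1) := by simpa [x, sub_add_eq_add_sub] using spectrum.notMem_iff.mp hc1
  have hδ1 : δ 1 = 0 := map_one_eq_zero_of_units_identity h
  rw [Algebra.algebraMap_eq_smul_one] at hx_def
  have hδx : δ x = -δ a := by rw [hx_def, map_sub, map_smul, hδ1, smul_zero, zero_sub]
  have hxx : x * x = (c * c) • (1 : R) - (2 * c) • a + a * a := by
    rw [hx_def]
    simp only [sub_mul, mul_sub, smul_mul_assoc, mul_smul_comm, one_mul, mul_one]
    module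
  have hδxx : δ (x * x) = δ (a * a) - (2 * c) • δ a := by
    rw [hxx, map_add, map_sub, map_smul, map_smul, hδ1, smul_zero, zero_sub, neg_add_eq_sub]
  have h2x : (2 * x) • δ x = (2 : 𝕜) • (a • δ a) - (2 * c) • δ a := by
    rw [hδx, hx_def]
    simp only [mul_sub, sub_smul, mul_smul_comm, mul_one, smul_assoc, mul_smul, smul_neg,
      ofNat_smul_eq_nsmul]
    generalize a • δ a = m
    module
  have key := map_mul_self_of_units_identity h hx hx1
  rw [hδxx, h2x] at key
  exact sub_left_inj.mp key

theorem spectrum.exists_notMem_and_add_one_notMem {𝕜 A : Type*} [NontriviallyNormedField 𝕜]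
    [NormedRing A] [NormedAlgebra 𝕜 A] [CompleteSpace A] (a : A) :
    ∃ c : 𝕜, c ∉ spectrum 𝕜 a ∧ c + 1 ∉ spectrum 𝕜 a := by
  have hρ : ∀ᶠ c in cobounded 𝕜, c ∉ spectrum 𝕜 a := isBounded_def.mp (spectrum.isBounded a)
  exact (hρ.and ((tendsto_add_const_cobounded 1).eventually hρ)).exists

/-- If `A δ(A⁻¹) + A⁻¹ δ(A) = δ(I)` for every invertible `A` in a unital Banach algebra,
then `δ` is a Jordan left derivation: `δ(A²) = 2 A δ(A)`. -/
theorem stmt7 {A : Type*} {M : Type*}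
    [NormedRing A] [NormedAlgebra ℂ A] [CompleteSpace A]
    [AddCommGroup M] [Module ℂ M] [Module A M] [IsScalarTower ℂ A M]
    (δ : A →ₗ[ℂ] M)
    (h : ∀ a : Aˣ, (a : A) • δ ((a⁻¹ : Aˣ) : A) + ((a⁻¹ : Aˣ) : A) • δ (a : A) = δ 1) :
    ∀ a : A, δ (a * a) = (2 : ℂ) • (a • δ a) := by
  intro a
  obtain ⟨c, hc, hc1⟩ := spectrum.exists_notMem_and_add_one_notMem (𝕜 := ℂ) a
  exact map_mul_self_of_notMem_spectrum h hc hc1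
end

section
/- Let W ∈ A be fixed. If δ : A → M is linear, δ(I) = 0, and δ(W) = Aδ(B)* + B*δ(A) whenever AB* = W, then the map A ↦ Wδ(A) is a Jordan left derivation, i.e., Wδ(A²) = 2AWδ(A) for all A ∈ A. -/
/-!
Put `E z = δ(z*)*`. For a unit `v`, the factorisation `W = v (v⁻¹W)**` gives
`E(v⁻¹W) = v⁻¹δ(W) - v⁻²W δ(v)`. `E` is additive, so for commuting units `u, w` with
`u + w = 2`, the identity `u⁻¹ + w⁻¹ = 2(uw)⁻¹` forces a relation between `δ u`, `δ w`, `δ(uw)`.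
With `u = 1 + x`, `w = 1 - x` and `δ 1 = 0` it reads `2Wδ(x²) = 4xWδ(x)`; every `a` is a
nonzero multiple of such an `x` (`‖x‖ < 1`), and the identity is homogeneous of degree two.
-/

section

variable {A M : Type*} [Ring A] [StarRing A] [AddCommGroup M] [Module A M] [StarAddMonoid M]

def StarDerivableAt (δ : A →+ M) (W : A) : Prop :=
  ∀ a b : A, a * star b = W → δ W = a • star (δ b) + star b • δ a

variable {W : A} {δ : A →+ M}

namespace StarDerivableAt

theorem star_apply_star_inv_mul (hδ : StarDerivableAt δ W) (v : Aˣ) :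
    star (δ (star (↑v⁻¹ * W))) = (↑v⁻¹ : A) • δ W - (↑v⁻¹ * ↑v⁻¹ * W : A) • δ v := by
  have h := hδ v (star (↑v⁻¹ * W)) (by rw [star_star, Units.mul_inv_cancel_left])
  rw [star_star] at h
  rw [h, smul_add, ← mul_smul, Units.inv_mul, one_smul, ← mul_smul, ← mul_assoc,
    add_sub_cancel_right]

theorem inv_sq_smul_add_of_inv_add_inv (hδ : StarDerivableAt δ W) {u w c : Aˣ}
    (h : (↑u⁻¹ + ↑w⁻¹ : A) = ↑c⁻¹ + ↑c⁻¹) :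
    (↑u⁻¹ * ↑u⁻¹ * W : A) • δ u + (↑w⁻¹ * ↑w⁻¹ * W : A) • δ w
      = 2 • ((↑c⁻¹ * ↑c⁻¹ * W : A) • δ c) := by
  have hE := congrArg (fun z => star (δ (star (z * W)))) h
  have hW := congrArg (· • δ W) h
  simp only [add_mul, star_add, map_add, hδ.star_apply_star_inv_mul, add_smul] at hE hW
  rw [two_nsmul]
  linear_combination (norm := abel) hW - hE

theorem sq_smul_add_of_add_eq_two (hδ : StarDerivableAt δ W) {u w : Aˣ} (hcomm : Commute u w)
    (hsum : (u + w : A) = 2) :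
    (w * w * W : A) • δ u + (u * u * W : A) • δ w = 2 • (W • δ (u * w)) := by
  have hinv : (↑u⁻¹ + ↑w⁻¹ : A) = ↑(u * w)⁻¹ + ↑(u * w)⁻¹ := by
    rw [show u⁻¹ = (w * u)⁻¹ * w by group, show w⁻¹ = (u * w)⁻¹ * u by group, ← hcomm.eq,
      Units.val_mul, Units.val_mul, ← mul_add, add_comm, hsum, mul_two]
  have cancel : ∀ z v : Aˣ, (u * w) * (u * w) = (z * z) * (v * v) →
      (↑(u * w) * ↑(u * w) * (↑v⁻¹ * ↑v⁻¹ * W) : A) = z * z * W := by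
    intro z v h
    have h' : (u * w) * (u * w) * v⁻¹ * v⁻¹ = z * z := by rw [h]; group
    simpa only [Units.val_mul, mul_assoc] using congrArg (fun y : Aˣ => (y : A) * W) h'
  have huw : (u * w) * (u * w) = (u * u) * (w * w) := by rw [← sq, hcomm.mul_pow, sq, sq]
  have hwu : (u * w) * (u * w) = (w * w) * (u * u) := by
    rw [huw, ← sq, ← sq, (hcomm.pow_pow 2 2).eq]
  have key := congrArg ((↑(u * w) * ↑(u * w) : A) • ·) (hδ.inv_sq_smul_add_of_inv_add_inv hinv)
  simp only [smul_add, smul_smul, smul_comm _ (2 : ℕ)] at key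
  rwa [cancel w u hwu, cancel u w huw, cancel 1 (u * w) (by rw [one_mul, one_mul]),
    Units.val_one, one_mul, one_mul, Units.val_mul] at key

theorem two_smul_smul_apply_mul_self (hδ : StarDerivableAt δ W) (hI : δ 1 = 0) {x : A}
    (hx₁ : IsUnit (1 + x)) (hx₂ : IsUnit (1 - x)) :
    2 • (W • δ (x * x)) = 4 • (x • (W • δ x)) := by
  obtain ⟨u, hu⟩ := hx₁
  obtain ⟨w, hw⟩ := hx₂
  have hcomm : Commute u w :=
    Units.ext (by rw [Units.val_mul, Units.val_mul, hu, hw]; noncomm_ring)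
  have key := hδ.sq_smul_add_of_add_eq_two hcomm
    (by rw [hu, hw, add_add_sub_cancel, one_add_one_eq_two])
  have hprod : (1 + x) * (1 - x) = 1 - x * x := by noncomm_ring
  have hcoef : (1 - x) * (1 - x) * W - (1 + x) * (1 + x) * W = -(4 • (x * W)) := by
    noncomm_ring
  rw [hu, hw, hprod, map_add, map_sub, map_sub, hI, zero_add, zero_sub, zero_sub, smul_neg,
    ← sub_eq_add_neg, ← sub_smul, hcoef, smul_neg, smul_neg, neg_smul, neg_inj, smul_assoc,
    mul_smul] at key
  exact key.symm

end StarDerivableAt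

end

open MulOpposite

theorem stmt8_general {A : Type*} {M : Type*}
    [NormedRing A] [NormedAlgebra ℂ A] [CompleteSpace A] [StarRing A]
    [AddCommGroup M] [Module ℂ M] [Module A M]
    [IsScalarTower ℂ A M]
    [StarAddMonoid M]
    (W : A)
    (δ : A →ₗ[ℂ] M) (hI : δ 1 = 0)
    (hδ : ∀ a b : A, a * star b = W → δ W = a • star (δ b) + star b • δ a) :
    ∀ a : A, W • δ (a * a) = (2 : ℂ) • (a • (W • δ a)) := by
  intro a
  set t : ℂ := (((1 + ‖a‖)⁻¹ : ℝ) : ℂ)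
  have ht : t ≠ 0 := Complex.ofReal_ne_zero.mpr (by positivity)
  have hx : ‖t • a‖ < 1 := by
    rw [norm_smul, Complex.norm_real, Real.norm_of_nonneg (by positivity),
      inv_mul_lt_one₀ (by positivity)]
    linarith
  have h := StarDerivableAt.two_smul_smul_apply_mul_self (δ := δ.toAddMonoidHom) hδ hI
    (by simpa using isUnit_one_sub_of_norm_lt_one (x := -(t • a)) (by rwa [norm_neg]))
    (isUnit_one_sub_of_norm_lt_one hx)
  simp only [LinearMap.toAddMonoidHom_coe, smul_mul_smul_comm, map_smul, smul_comm W,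
    smul_assoc t a, smul_comm a t] at h
  refine smul_right_injective M (mul_ne_zero two_ne_zero (mul_ne_zero ht ht)) ?_
  generalize W • δ (a * a) = X at h ⊢
  generalize a • W • δ a = Y at h ⊢
  linear_combination (norm := module) h

/-- If `δ(I) = 0` and `δ(W) = A δ(B)* + B* δ(A)` whenever `A B* = W`, then `W δ` is a
Jordan left derivation: `W δ(A²) = 2 A W δ(A)`. -/
theorem stmt8 {A : Type*} {M : Type*}
    [NormedRing A] [NormedAlgebra ℂ A] [CompleteSpace A] [StarRing A]
    [AddCommGroup M] [Module ℂ M] [Module A M] [Module Aᵐᵒᵖ M]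
    [SMulCommClass A Aᵐᵒᵖ M] [IsScalarTower ℂ A M] [IsScalarTower ℂ Aᵐᵒᵖ M]
    [StarAddMonoid M]
    (hstar_left : ∀ (a : A) (m : M), star (a • m) = op (star a) • star m)
    (hstar_right : ∀ (a : A) (m : M), star (op a • m) = star a • star m)
    (W : A)
    (δ : A →ₗ[ℂ] M) (hI : δ 1 = 0)
    (hδ : ∀ a b : A, a * star b = W → δ W = a • star (δ b) + star b • δ a) :
    ∀ a : A, W • δ (a * a) = (2 : ℂ) • (a • (W • δ a)) :=
  stmt8_general W δ hI hδ
end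

section
/- If δ : A → M is linear and satisfies δ(I) = Aδ(B)* + B*δ(A) for all A, B ∈ A with AB* = I, then δ is a Jordan left derivation (δ(A²) = 2Aδ(A) for all A). -/
open MulOpposite

/-- If `δ(I) = A δ(B)* + B* δ(A)` for all `A, B` with `A B* = I`, then `δ` is a Jordan
left derivation. -/
theorem stmt9 {A : Type*} {M : Type*}
    [NormedRing A] [NormedAlgebra ℂ A] [CompleteSpace A] [StarRing A]
    [AddCommGroup M] [Module ℂ M] [Module A M] [Module Aᵐᵒᵖ M]
    [SMulCommClass A Aᵐᵒᵖ M] [IsScalarTower ℂ A M] [IsScalarTower ℂ Aᵐᵒᵖ M]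
    [StarAddMonoid M]
    (hstar_left : ∀ (a : A) (m : M), star (a • m) = op (star a) • star m)
    (hstar_right : ∀ (a : A) (m : M), star (op a • m) = star a • star m)
    (δ : A →ₗ[ℂ] M)
    (hδ : ∀ a b : A, a * star b = 1 → δ 1 = a • star (δ b) + star b • δ a) :
    ∀ a : A, δ (a * a) = (2 : ℂ) • (a • δ a) := by
  -- Step 1 : δ 1 = 0
  have h1 : δ (1 : A) = 0 := by
    have h := hδ 1 1 (by simp)
    simp only [star_one, one_smul] at h
    have hs : star (δ (1 : A)) = 0 := right_eq_add.mp h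
    have := congrArg star hs
    rwa [star_star, star_zero] at this
  -- Step 2 : key identity for units
  have key2 : ∀ u : Aˣ, star (δ (star ((u⁻¹ : Aˣ) : A)))
      = -(((u⁻¹ : Aˣ) : A) • (((u⁻¹ : Aˣ) : A) • δ (u : A))) := by
    intro u
    have h := hδ (u : A) (star ((u⁻¹ : Aˣ) : A)) (by rw [star_star]; exact u.mul_inv)
    rw [h1, star_star] at h
    have h2 : (u : A) • star (δ (star ((u⁻¹ : Aˣ) : A)))
        = -(((u⁻¹ : Aˣ) : A) • δ (u : A)) := by
      rw [eq_comm, add_eq_zero_iff_eq_neg] at h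
      exact h
    calc star (δ (star ((u⁻¹ : Aˣ) : A)))
        = (((u⁻¹ : Aˣ) : A) * (u : A)) • star (δ (star ((u⁻¹ : Aˣ) : A))) := by
          rw [u.inv_mul, one_smul]
      _ = ((u⁻¹ : Aˣ) : A) • ((u : A) • star (δ (star ((u⁻¹ : Aˣ) : A)))) := by
          rw [mul_smul]
      _ = -(((u⁻¹ : Aˣ) : A) • (((u⁻¹ : Aˣ) : A) • δ (u : A))) := by
          rw [h2, smul_neg]
  intro a
  -- Step 3 : construct units  r•1 + a  for r > ‖a‖
  have mk_unit : ∀ r : ℝ, ‖a‖ < r → ∃ u : Aˣ, (u : A) = ((r : ℂ)) • 1 + a := by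
    intro r hr
    have hr0 : (0 : ℝ) < r := (norm_nonneg a).trans_lt hr
    have hz : ((r : ℝ) : ℂ) ≠ 0 := Complex.ofReal_ne_zero.mpr hr0.ne'
    have ht : ‖-(((r : ℂ))⁻¹ • a)‖ < 1 := by
      rw [norm_neg, norm_smul, norm_inv, Complex.norm_real,
        Real.norm_of_nonneg hr0.le]
      calc r⁻¹ * ‖a‖ < r⁻¹ * r := by
            exact mul_lt_mul_of_pos_left hr (inv_pos.mpr hr0)
        _ = 1 := inv_mul_cancel₀ hr0.ne'
    obtain ⟨c, hc⟩ : IsUnit (((r : ℂ)) • (1 : A)) := by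
      rw [← Algebra.algebraMap_eq_smul_one]
      exact (isUnit_iff_ne_zero.mpr hz).map (algebraMap ℂ A)
    refine ⟨c * Units.oneSub _ ht, ?_⟩
    rw [Units.val_mul, hc, Units.val_oneSub, sub_neg_eq_add, mul_add, mul_one,
      smul_mul_assoc, one_mul, smul_smul, mul_inv_cancel₀ hz, one_smul]
  obtain ⟨u1, hu1⟩ := mk_unit (‖a‖ + 1) (by linarith)
  obtain ⟨u2, hu2⟩ := mk_unit (‖a‖ + 2) (by linarith)
  set ρ : ℂ := ((‖a‖ + 1 : ℝ) : ℂ) with hρ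
  have hu2' : (u2 : A) = (u1 : A) + 1 := by
    have hcast : ((‖a‖ + 2 : ℝ) : ℂ) = ((‖a‖ + 1 : ℝ) : ℂ) + 1 := by push_cast; ring
    rw [hu2, hcast, add_smul, one_smul, hu1]
    abel
  have hδu1 : δ (u1 : A) = δ a := by
    rw [hu1, map_add, map_smul, h1, smul_zero, zero_add]
  have hδu2 : δ (u2 : A) = δ a := by
    rw [hu2', map_add, h1, add_zero, hδu1]
  -- commutation
  have hcomm : (u1 : A) * (u2 : A) = (u2 : A) * (u1 : A) := by
    rw [hu2', mul_add, add_mul, mul_one, one_mul]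
  have hcommU : u1 * u2 = u2 * u1 := Units.ext (by
    rw [Units.val_mul, Units.val_mul]; exact hcomm)
  obtain ⟨w, hw⟩ : ∃ w : Aˣ, w = u2 * u1 := ⟨_, rfl⟩
  -- resolvent identity
  have hres : ((u1⁻¹ : Aˣ) : A) - ((u2⁻¹ : Aˣ) : A) = ((w⁻¹ : Aˣ) : A) := by
    have hwinv : w⁻¹ = u1⁻¹ * u2⁻¹ := by rw [hw, mul_inv_rev]
    rw [hwinv, Units.val_mul]
    have h21 : (u2 : A) - (u1 : A) = 1 := by rw [hu2']; abel
    have key : ((u1⁻¹ : Aˣ) : A) * (((u2 : A) - (u1 : A)) * ((u2⁻¹ : Aˣ) : A))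
        = ((u1⁻¹ : Aˣ) : A) - ((u2⁻¹ : Aˣ) : A) := by
      rw [sub_mul, Units.mul_inv, mul_sub, mul_one, ← mul_assoc, Units.inv_mul, one_mul]
    rw [← key, h21, one_mul]
  have hKw : star (δ (star ((w⁻¹ : Aˣ) : A)))
      = star (δ (star ((u1⁻¹ : Aˣ) : A))) - star (δ (star ((u2⁻¹ : Aˣ) : A))) := by
    rw [← hres, star_sub, map_sub, star_sub]
  -- unit identities
  have hU1 : w * (w * (u1⁻¹ * u1⁻¹)) = u2 * u2 := by
    rw [hw, mul_assoc u2 u1 (u1⁻¹ * u1⁻¹), mul_inv_cancel_left,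
      mul_assoc u2 u1 (u2 * u1⁻¹), ← mul_assoc u1 u2 u1⁻¹, hcommU,
      mul_inv_cancel_right]
  have hU2 : w * (w * (u2⁻¹ * u2⁻¹)) = u1 * u1 := by
    rw [hw, ← hcommU, mul_assoc u1 u2 (u2⁻¹ * u2⁻¹), mul_inv_cancel_left,
      mul_assoc u1 u2 (u1 * u2⁻¹), ← mul_assoc u2 u1 u2⁻¹, ← hcommU,
      mul_inv_cancel_right]
  have hE1 : (w : A) * ((w : A) * (((u1⁻¹ : Aˣ) : A) * ((u1⁻¹ : Aˣ) : A)))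
      = (u2 : A) * (u2 : A) := by
    have := congrArg (Units.val) hU1
    simpa using this
  have hE2 : (w : A) * ((w : A) * (((u2⁻¹ : Aˣ) : A) * ((u2⁻¹ : Aˣ) : A)))
      = (u1 : A) * (u1 : A) := by
    have := congrArg (Units.val) hU2
    simpa using this
  -- main identity
  have inner : ((w⁻¹ : Aˣ) : A) • (((w⁻¹ : Aˣ) : A) • δ (w : A))
      = ((u1⁻¹ : Aˣ) : A) • (((u1⁻¹ : Aˣ) : A) • δ a)
        - ((u2⁻¹ : Aˣ) : A) • (((u2⁻¹ : Aˣ) : A) • δ a) := by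
    have e := key2 w
    have e1 := key2 u1
    have e2 := key2 u2
    rw [hδu1] at e1
    rw [hδu2] at e2
    rw [hKw, e1, e2] at e
    have e' := e.symm
    rw [neg_sub_neg] at e'
    have h2 := neg_eq_iff_eq_neg.mp e'
    rw [neg_sub] at h2
    exact h2
  have hone : ((w : A) * (w : A) * ((w⁻¹ : Aˣ) : A) * ((w⁻¹ : Aˣ) : A)) = 1 := by
    simp [mul_assoc]
  have main : δ (w : A)
      = ((u2 : A) * (u2 : A)) • δ a - ((u1 : A) * (u1 : A)) • δ a := by
    calc δ (w : A)
        = ((w : A) * (w : A) * ((w⁻¹ : Aˣ) : A) * ((w⁻¹ : Aˣ) : A)) • δ (w : A) := by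
          rw [hone, one_smul]
      _ = (w : A) • ((w : A) • (((w⁻¹ : Aˣ) : A) • (((w⁻¹ : Aˣ) : A) • δ (w : A)))) := by
          rw [mul_smul, mul_smul, mul_smul]
      _ = (w : A) • ((w : A) • (((u1⁻¹ : Aˣ) : A) • (((u1⁻¹ : Aˣ) : A) • δ a)))
          - (w : A) • ((w : A) • (((u2⁻¹ : Aˣ) : A) • (((u2⁻¹ : Aˣ) : A) • δ a))) := by
          rw [inner, smul_sub, smul_sub]
      _ = ((w : A) * ((w : A) * (((u1⁻¹ : Aˣ) : A) * ((u1⁻¹ : Aˣ) : A)))) • δ a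
          - ((w : A) * ((w : A) * (((u2⁻¹ : Aˣ) : A) * ((u2⁻¹ : Aˣ) : A)))) • δ a := by
          simp only [mul_smul]
      _ = ((u2 : A) * (u2 : A)) • δ a - ((u1 : A) * (u1 : A)) • δ a := by
          rw [hE1, hE2]
  -- expand both sides
  have hwval : (w : A) = (u1 : A) * (u1 : A) + (u1 : A) := by
    rw [hw, Units.val_mul, hu2', add_mul, one_mul]
  have hsq : (u1 : A) * (u1 : A) = (ρ * ρ) • (1 : A) + ρ • a + ρ • a + a * a := by
    rw [hu1]
    simp only [mul_add, add_mul, smul_add, smul_mul_assoc, mul_smul_comm, smul_smul,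
      one_mul, mul_one]
    abel
  have hδsq : δ ((u1 : A) * (u1 : A)) = δ (a * a) + ρ • δ a + ρ • δ a := by
    rw [hsq, map_add, map_add, map_add, map_smul, map_smul, h1, smul_zero, zero_add]
    abel
  have hδw : δ (w : A) = δ (a * a) + ρ • δ a + ρ • δ a + δ a := by
    rw [hwval, map_add, hδsq, hδu1]
  have hdiff : (u2 : A) * (u2 : A) - (u1 : A) * (u1 : A) = (u1 : A) + (u1 : A) + 1 := by
    rw [hu2']
    simp only [mul_add, add_mul, mul_one, one_mul]
    abel
  have hRHS : ((u2 : A) * (u2 : A)) • δ a - ((u1 : A) * (u1 : A)) • δ a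
      = ρ • δ a + a • δ a + (ρ • δ a + a • δ a) + δ a := by
    rw [← sub_smul, hdiff, hu1]
    simp only [add_smul, one_smul, smul_assoc]
  rw [hδw, hRHS] at main
  rw [two_smul]
  have fin : δ (a * a) + (ρ • δ a + ρ • δ a + δ a)
      = (a • δ a + a • δ a) + (ρ • δ a + ρ • δ a + δ a) := by
    calc δ (a * a) + (ρ • δ a + ρ • δ a + δ a)
        = δ (a * a) + ρ • δ a + ρ • δ a + δ a := by abel
      _ = ρ • δ a + a • δ a + (ρ • δ a + a • δ a) + δ a := main
      _ = (a • δ a + a • δ a) + (ρ • δ a + ρ • δ a + δ a) := by abel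
  exact add_right_cancel fin
end

section
/- Let W be a left separating point of M with WA = AW for all A ∈ A. If δ : A → M is linear and satisfies δ(W) = Aδ(B)* + B*δ(A) whenever AB* = W, then δ is a Jordan left derivation. -/
/-!
Putting `a = u⁻¹` and `b = (u W)*` in the hypothesis gives
`(u u W) δ(u⁻¹) = u δ(W) - δ((u W)*)*` for every unit `u`, and the right-hand side is additive in
`u`. If `t` and `s = c - t` are units (`c ≠ 0` a scalar), then `t⁻¹ + s⁻¹ = c (t s)⁻¹`; additivity
along this identity, multiplied by `(t s)²` to clear the inverses, reads
`c W δ(t²) = 2c W t δ(t)`, and since `W` is central and separating, `δ(t²) = 2 t δ(t)`.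
Any element is a scalar translate of such a `t` (the spectrum is bounded), and because `δ(1) = 0`
the defect `δ(a²) - 2 a δ(a)` does not change under scalar translation.
-/

theorem exists_ne_zero_notMem_spectrum {𝕜 A : Type*} [NontriviallyNormedField 𝕜] [NormedRing A]
    [NormedAlgebra 𝕜 A] [CompleteSpace A] (a : A) : ∃ c : 𝕜, c ≠ 0 ∧ c ∉ spectrum 𝕜 a := by
  obtain ⟨c, hc⟩ := NormedField.exists_lt_norm 𝕜 (‖a‖ * ‖(1 : A)‖)
  refine ⟨c, norm_pos_iff.mp (lt_of_le_of_lt (by positivity) hc), fun hmem => ?_⟩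
  have := mem_closedBall_zero_iff.mp (spectrum.subset_closedBall_norm_mul a hmem)
  linarith

section

variable {R M F : Type*} [Ring R] [StarRing R] [AddCommGroup M] [Module R M] [StarAddMonoid M]
  [FunLike F R M] {δ : F} {W : R}

theorem map_one_eq_zero_of_star (hW : ∀ m : M, W • m = 0 → m = 0)
    (hδ : ∀ a b : R, a * star b = W → δ W = a • star (δ b) + star b • δ a) : δ 1 = 0 := by
  have h := hδ W 1 (by rw [star_one, mul_one])
  rw [star_one, one_smul, eq_comm, add_eq_right] at h
  exact star_eq_zero.mp (hW _ h)

theorem mul_mul_smul_map_inv_eq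
    (hδ : ∀ a b : R, a * star b = W → δ W = a • star (δ b) + star b • δ a) (u : Rˣ) :
    (↑u * ↑u * W) • δ ↑u⁻¹ = (u : R) • δ W - star (δ (star (↑u * W))) := by
  have h := congrArg ((u : R) • ·) (hδ ↑u⁻¹ (star (↑u * W)) (by simp))
  simp only [star_star, smul_add, smul_smul, Units.mul_inv, one_smul] at h
  rw [h, mul_assoc]
  abel

theorem mul_mul_smul_map_inv_add [AddMonoidHomClass F R M]
    (hδ : ∀ a b : R, a * star b = W → δ W = a • star (δ b) + star b • δ a)
    {u v w : Rˣ} (huvw : (w : R) = u + v) :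
    (↑w * ↑w * W) • δ ↑w⁻¹ = (↑u * ↑u * W) • δ ↑u⁻¹ + (↑v * ↑v * W) • δ ↑v⁻¹ := by
  rw [mul_mul_smul_map_inv_eq hδ, mul_mul_smul_map_inv_eq hδ, mul_mul_smul_map_inv_eq hδ, huvw,
    add_mul, star_add, map_add, star_add, add_smul]
  abel

end

section

variable {𝕜 R M : Type*} [Field 𝕜] [Ring R] [Algebra 𝕜 R] [AddCommGroup M] [Module 𝕜 M]
  [Module R M] [IsScalarTower 𝕜 R M] {δ : R →ₗ[𝕜] M} {W : R}

theorem inv_add_inv_eq_smul_inv_mul {s t : Rˣ} {c : 𝕜} (hst : (s : R) + t = algebraMap 𝕜 R c) :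
    (↑t⁻¹ + ↑s⁻¹ : R) = c • ↑(t * s)⁻¹ := by
  have hts : Commute (t : R) s :=
    eq_sub_of_add_eq hst ▸ (Algebra.commute_algebraMap_right c _).sub_right (Commute.refl _)
  rw [Algebra.smul_def, ← hst, mul_inv_rev, Units.val_mul, add_mul, Units.mul_inv_cancel_left,
    hts.units_inv_right.left_comm, Units.mul_inv, mul_one, add_comm]

theorem smul_map_mul_self_of_add_eq_algebraMap (hδ1 : δ 1 = 0)
    (hadd : ∀ u v w : Rˣ, (w : R) = u + v →
      (↑w * ↑w * W) • δ ↑w⁻¹ = (↑u * ↑u * W) • δ ↑u⁻¹ + (↑v * ↑v * W) • δ ↑v⁻¹)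
    {s t : Rˣ} {c : 𝕜} (hc : c ≠ 0) (hst : (s : R) + t = algebraMap 𝕜 R c) :
    W • δ (t * t) = (2 : 𝕜) • ((↑t * W) • δ t) := by
  have hs : (s : R) = algebraMap 𝕜 R c - t := eq_sub_of_add_eq hst
  have hts : Commute (t : R) s :=
    hs ▸ (Algebra.commute_algebraMap_right c _).sub_right (Commute.refl _)
  set w : Rˣ := Units.map (algebraMap 𝕜 R : 𝕜 →* R) (Units.mk0 c hc) * (t * s)⁻¹
  have hw : (w : R) = ↑t⁻¹ + ↑s⁻¹ := by
    rw [inv_add_inv_eq_smul_inv_mul hst, Algebra.smul_def]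
    rfl
  have hwinv : (↑w⁻¹ : R) = c⁻¹ • (t * s) := by
    simp [w, Algebra.algebraMap_eq_smul_one]
  have hδs : δ s = -δ t := by
    rw [hs, map_sub, Algebra.algebraMap_eq_smul_one, map_smul, hδ1, smul_zero, zero_sub]
  have hδts : δ (t * s) = c • δ t - δ (t * t) := by
    rw [hs, mul_sub, Algebra.algebraMap_eq_smul_one, mul_smul_comm, mul_one, map_sub, map_smul]
  have hXw : ↑(t * s) * ↑(t * s) * (↑w * ↑w * W) = (c * c) • W := by
    simp [w, Algebra.algebraMap_eq_smul_one, mul_assoc, smul_smul]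
  have hX : (↑(t * s) * ↑(t * s) : R) = ↑t * ↑t * (↑s * ↑s) := by
    rw [Units.val_mul, hts.symm.mul_mul_mul_comm]
  have hXt : ↑(t * s) * ↑(t * s) * (↑t⁻¹ * ↑t⁻¹ * W) = ↑s * ↑s * W := by
    rw [hX, ((hts.mul_right hts).mul_left (hts.mul_right hts)).eq]
    simp only [mul_assoc, Units.mul_inv_cancel_left]
  have hXs : ↑(t * s) * ↑(t * s) * (↑s⁻¹ * ↑s⁻¹ * W) = ↑t * ↑t * W := by
    rw [hX]
    simp only [mul_assoc, Units.mul_inv_cancel_left]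
  have hsum := congrArg ((↑(t * s) * ↑(t * s) : R) • ·) (hadd _ _ w hw)
  simp only [inv_inv, hwinv, map_smul, hδts, hδs, smul_add, smul_smul, hXw, hXt, hXs] at hsum
  have hsq : (s * s - t * t : R) * W = (c * c) • W - (2 * c) • (t * W) := by
    rw [hs]
    simp only [Algebra.algebraMap_eq_smul_one, sub_mul, mul_sub, smul_mul_assoc, mul_smul_comm,
      one_mul, mul_one]
    module
  rw [smul_neg, ← sub_eq_add_neg, ← sub_smul, ← sub_mul, hsq, sub_smul, smul_assoc, smul_assoc,
    smul_assoc, smul_comm W c⁻¹, smul_smul, mul_inv_cancel_right₀ hc, smul_sub,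
    smul_comm W c] at hsum
  apply smul_right_injective M hc
  generalize W • δ t = P, W • δ (t * t) = Q, ((t : R) * W) • δ t = T at hsum ⊢
  linear_combination (norm := module) -hsum

theorem map_mul_self_of_add_eq_algebraMap (hW : ∀ m : M, W • m = 0 → m = 0)
    (hcomm : ∀ a : R, W * a = a * W) (hδ1 : δ 1 = 0)
    (hadd : ∀ u v w : Rˣ, (w : R) = u + v →
      (↑w * ↑w * W) • δ ↑w⁻¹ = (↑u * ↑u * W) • δ ↑u⁻¹ + (↑v * ↑v * W) • δ ↑v⁻¹)
    {s t : Rˣ} {c : 𝕜} (hc : c ≠ 0) (hst : (s : R) + t = algebraMap 𝕜 R c) :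
    δ (t * t) = (2 : 𝕜) • ((t : R) • δ t) := by
  have h := smul_map_mul_self_of_add_eq_algebraMap hδ1 hadd hc hst
  rw [← hcomm, mul_smul, ← smul_comm W (2 : 𝕜), ← sub_eq_zero, ← smul_sub] at h
  exact sub_eq_zero.mp (hW _ h)

theorem map_mul_self_sub_add_algebraMap (hδ1 : δ 1 = 0) (a : R) (c : 𝕜) :
    δ ((a + algebraMap 𝕜 R c) * (a + algebraMap 𝕜 R c)) -
        (2 : 𝕜) • ((a + algebraMap 𝕜 R c) • δ (a + algebraMap 𝕜 R c)) =
      δ (a * a) - (2 : 𝕜) • (a • δ a) := by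
  simp only [Algebra.algebraMap_eq_smul_one, mul_add, add_mul, smul_mul_assoc, mul_smul_comm,
    one_mul, mul_one, map_add, map_smul, hδ1, smul_zero, add_zero, add_smul, smul_assoc, one_smul,
    smul_add]
  generalize a • δ a = x
  module

theorem map_mul_self_of_forall_exists_notMem_spectrum (hW : ∀ m : M, W • m = 0 → m = 0)
    (hcomm : ∀ a : R, W * a = a * W) (hδ1 : δ 1 = 0)
    (hadd : ∀ u v w : Rˣ, (w : R) = u + v →
      (↑w * ↑w * W) • δ ↑w⁻¹ = (↑u * ↑u * W) • δ ↑u⁻¹ + (↑v * ↑v * W) • δ ↑v⁻¹)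
    (hspec : ∀ x : R, ∃ c : 𝕜, c ≠ 0 ∧ c ∉ spectrum 𝕜 x) (a : R) :
    δ (a * a) = (2 : 𝕜) • (a • δ a) := by
  obtain ⟨c, -, hc⟩ := hspec (-a)
  obtain ⟨t, ht⟩ := spectrum.notMem_iff.mp hc
  rw [sub_neg_eq_add, add_comm] at ht
  obtain ⟨d, hd, hd'⟩ := hspec t
  obtain ⟨s, hs⟩ := spectrum.notMem_iff.mp hd'
  have hjordan := map_mul_self_of_add_eq_algebraMap hW hcomm hδ1 hadd hd
    (eq_add_of_sub_eq hs.symm).symm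
  rw [← sub_eq_zero, ← map_mul_self_sub_add_algebraMap hδ1 a c, ← ht, hjordan, sub_self]

end

open MulOpposite

theorem stmt10_general {A : Type*} {M : Type*}
    [NormedRing A] [NormedAlgebra ℂ A] [CompleteSpace A] [StarRing A]
    [AddCommGroup M] [Module ℂ M] [Module A M]
    [IsScalarTower ℂ A M]
    [StarAddMonoid M]
    (W : A) (hW : ∀ m : M, W • m = 0 → m = 0)
    (hcomm : ∀ a : A, W * a = a * W)
    (δ : A →ₗ[ℂ] M)
    (hδ : ∀ a b : A, a * star b = W → δ W = a • star (δ b) + star b • δ a) :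
    ∀ a : A, δ (a * a) = (2 : ℂ) • (a • δ a) :=
  map_mul_self_of_forall_exists_notMem_spectrum hW hcomm (map_one_eq_zero_of_star hW hδ)
    (fun _ _ _ h => mul_mul_smul_map_inv_add hδ h) exists_ne_zero_notMem_spectrum

/-- If `W` is a left separating point of `M` with `W A = A W` for all `A`, and
`δ(W) = A δ(B)* + B* δ(A)` whenever `A B* = W`, then `δ` is a Jordan left derivation. -/
theorem stmt10 {A : Type*} {M : Type*}
    [NormedRing A] [NormedAlgebra ℂ A] [CompleteSpace A] [StarRing A]
    [AddCommGroup M] [Module ℂ M] [Module A M] [Module Aᵐᵒᵖ M]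
    [SMulCommClass A Aᵐᵒᵖ M] [IsScalarTower ℂ A M] [IsScalarTower ℂ Aᵐᵒᵖ M]
    [StarAddMonoid M]
    (hstar_left : ∀ (a : A) (m : M), star (a • m) = op (star a) • star m)
    (hstar_right : ∀ (a : A) (m : M), star (op a • m) = star a • star m)
    (W : A) (hW : ∀ m : M, W • m = 0 → m = 0)
    (hcomm : ∀ a : A, W * a = a * W)
    (δ : A →ₗ[ℂ] M)
    (hδ : ∀ a b : A, a * star b = W → δ W = a • star (δ b) + star b • δ a) :
    ∀ a : A, δ (a * a) = (2 : ℂ) • (a • δ a) :=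
  stmt10_general W hW hcomm δ hδ
end

section
/- Let M have the property 𝕄. If δ : A → M is linear and δ(A)∘B − A∘δ(B) = 0 whenever A∘B = 0 (where A∘B = AB + BA), then δ(A) = ½(Aδ(I) + δ(I)A) for every A ∈ A. -/
/-!
Put `E = δ - ½ (· ∘ δ(1))`, so that `E(1) = 0` and `E(a)∘b = a∘E(b)` whenever `ab = ba = 0`.
For an idempotent `p`, testing this against `1 - p` kills `E(p)`; since `p + p x (1 - p)` is again
idempotent, `E` also kills the corners `p A (1 - p)`, and testing `1 - p` against `p x p` gives
`(1 - p) E(p x p) = 0`. Peirce decomposition then yields `E(p a) = p E(a)`, hence `E(X a) = X E(a)`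
for every `X` in the algebra generated by idempotents, and in particular `E(X) = X E(1) = 0` there.
For `X` in the ideal `J`, also `X a ∈ J`, so `X E(a) = E(X a) = 0`, and property `𝕄` forces `E(a) = 0`.
-/

open MulOpposite

theorem IsIdempotentElem.add_mul_mul_one_sub {A : Type*} [Ring A] {p : A}
    (hp : IsIdempotentElem p) (x : A) : IsIdempotentElem (p + p * x * (1 - p)) := by
  have hqp : ∀ y, (1 - p) * (p * y) = 0 := fun y => by
    rw [← mul_assoc, hp.one_sub_mul_self, zero_mul]
  simp only [IsIdempotentElem, add_mul, mul_add, mul_assoc, hp.eq, hp.mul_self_mul,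
    hp.one_sub_mul_self, hqp, mul_zero, add_zero]

theorem eq_zero_of_add_self_eq_zero (A : Type*) {M : Type*} [Ring A] [AddCommGroup M] [Module A M]
    [Invertible (2 : A)] {v : M} (h : v + v = 0) : v = 0 := by
  rw [← one_smul A v, ← invOf_mul_self (2 : A), mul_smul, two_smul, h, smul_zero]

section Bimodule

variable {A M : Type*} [Ring A] [AddCommGroup M] [Module A M] [Module Aᵐᵒᵖ M]

/-- `op a • m` is the right action `m a`, so this is the Jordan product `a ∘ m = a m + m a`. -/
def jordanSMul (a : A) (m : M) : M := a • m + op a • m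

theorem jordanSMul_sub (a : A) (m n : M) :
    jordanSMul a (m - n) = jordanSMul a m - jordanSMul a n := by
  simp only [jordanSMul, smul_sub]; abel

variable [SMulCommClass A Aᵐᵒᵖ M]

theorem smul_eq_zero_of_jordanSMul_eq_zero [Invertible (2 : A)] {q : A} {v : M}
    (hq : IsIdempotentElem q) (h : jordanSMul q v = 0) : q • v = 0 := by
  have hleft : q • v + q • op q • v = 0 := by
    simpa only [jordanSMul, smul_add, smul_smul, hq.eq, smul_zero] using congrArg (q • ·) h
  have hright : op q • q • v + op q • v = 0 := by
    simpa only [jordanSMul, smul_add, smul_smul, ← op_mul, hq.eq, smul_zero]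
      using congrArg (op q • ·) h
  rw [← smul_comm q (op q) v] at hright
  -- both `q v` and `v q` equal `-(q v q)`
  have hsym : q • v = op q • v := by
    rw [← add_right_cancel_iff (a := q • op q • v), add_comm (op q • v), hleft, hright]
  exact eq_zero_of_add_self_eq_zero A (by rwa [jordanSMul, ← hsym] at h)

theorem jordanSMul_jordanSMul_comm_of_mul_eq_zero {a b : A} (hab : a * b = 0) (hba : b * a = 0)
    (m : M) : jordanSMul a (jordanSMul b m) = jordanSMul b (jordanSMul a m) := by
  simp only [jordanSMul, smul_add, smul_smul, ← op_mul, hab, hba, op_zero, zero_smul, zero_add,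
    add_zero, smul_comm a (op b), smul_comm b (op a)]
  abel

end Bimodule

section LinearJordan

variable (R : Type*) {A M : Type*} [CommSemiring R] [Ring A] [Algebra R A] [AddCommGroup M]
  [Module R M] [Module A M] [Module Aᵐᵒᵖ M] [IsScalarTower R A M] [IsScalarTower R Aᵐᵒᵖ M]

theorem jordanSMul_smul (a : A) (c : R) (m : M) : jordanSMul a (c • m) = c • jordanSMul a m := by
  simp only [jordanSMul, smul_add, smul_comm a c, smul_comm (op a) c]

def jordanSMulRight (m : M) : A →ₗ[R] M where
  toFun a := jordanSMul a m
  map_add' a b := by simp only [jordanSMul, op_add, add_smul]; abel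
  map_smul' c a := by simp only [jordanSMul, op_smul, smul_assoc, smul_add, RingHom.id_apply]

end LinearJordan

section Orthogonal

variable {A M : Type*} [Ring A] [AddCommGroup M] [Module A M] [Module Aᵐᵒᵖ M]

def JordanSymmetricOnOrthogonal (E : A → M) : Prop :=
  ∀ a b : A, a * b = 0 → b * a = 0 → jordanSMul b (E a) = jordanSMul a (E b)

namespace JordanSymmetricOnOrthogonal

variable {F : Type*} [FunLike F A M] {E : F}

section Idempotent

variable [Invertible (2 : A)] [AddMonoidHomClass F A M]

theorem map_idempotent (hE : JordanSymmetricOnOrthogonal E) (hE1 : E 1 = 0) {p : A}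
    (hp : IsIdempotentElem p) : E p = 0 := by
  have h := hE p (1 - p) hp.mul_one_sub_self hp.one_sub_mul_self
  rw [map_sub, hE1, zero_sub] at h
  simp only [jordanSMul, sub_smul, one_smul, op_sub, op_one, smul_neg] at h
  exact eq_zero_of_add_self_eq_zero A (by rw [← sub_eq_zero.mpr h]; abel)

theorem map_mul_mul_one_sub (hE : JordanSymmetricOnOrthogonal E) (hE1 : E 1 = 0) {p : A}
    (hp : IsIdempotentElem p) (x : A) : E (p * x * (1 - p)) = 0 := by
  have h := hE.map_idempotent hE1 (hp.add_mul_mul_one_sub x)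
  rwa [map_add, hE.map_idempotent hE1 hp, zero_add] at h

variable [SMulCommClass A Aᵐᵒᵖ M]

theorem one_sub_smul_map_mul_mul_self (hE : JordanSymmetricOnOrthogonal E) (hE1 : E 1 = 0)
    {p : A} (hp : IsIdempotentElem p) (x : A) : (1 - p) • E (p * x * p) = 0 := by
  have hleft : (1 - p) * (p * x * p) = 0 := by
    rw [← mul_assoc, ← mul_assoc, hp.one_sub_mul_self, zero_mul, zero_mul]
  have hright : p * x * p * (1 - p) = 0 := by rw [mul_assoc, hp.mul_one_sub_self, mul_zero]
  have h := hE (1 - p) (p * x * p) hleft hright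
  rw [hE.map_idempotent hE1 hp.one_sub, jordanSMul, smul_zero, smul_zero, add_zero] at h
  exact smul_eq_zero_of_jordanSMul_eq_zero hp.one_sub h.symm

theorem map_idempotent_mul (hE : JordanSymmetricOnOrthogonal E) (hE1 : E 1 = 0) {p : A}
    (hp : IsIdempotentElem p) (a : A) : E (p * a) = p • E a := by
  have hpa : p * a = p * a * p + p * a * (1 - p) := by noncomm_ring
  have ha : a = p * a * p + p * a * (1 - p) + ((1 - p) * a * p + (1 - p) * a * (1 - p)) := by
    noncomm_ring
  have corner := hE.map_mul_mul_one_sub hE1 hp a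
  have corner' : E ((1 - p) * a * p) = 0 := by
    simpa only [sub_sub_cancel] using hE.map_mul_mul_one_sub hE1 hp.one_sub a
  have diag : (1 - p) • E (p * a * p) = 0 := hE.one_sub_smul_map_mul_mul_self hE1 hp a
  have diag' : p • E ((1 - p) * a * (1 - p)) = 0 := by
    simpa only [sub_sub_cancel] using hE.one_sub_smul_map_mul_mul_self hE1 hp.one_sub a
  have hEa : E a = E (p * a * p) + E ((1 - p) * a * (1 - p)) := by
    conv_lhs => rw [ha]
    rw [map_add, map_add, map_add, corner, corner', add_zero, zero_add]
  rw [sub_smul, one_smul, sub_eq_zero] at diag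
  rw [hpa, map_add, corner, add_zero, hEa, smul_add, diag', add_zero]
  exact diag

end Idempotent

variable [SMulCommClass A Aᵐᵒᵖ M] {R : Type*} [CommSemiring R] [Algebra R A] [Module R M]
  [IsScalarTower R A M]

theorem map_mul_of_mem_adjoin [Invertible (2 : A)] [LinearMapClass F R A M]
    (hE : JordanSymmetricOnOrthogonal E) (hE1 : E 1 = 0) {X : A}
    (hX : X ∈ Algebra.adjoin R {e : A | IsIdempotentElem e}) (a : A) : E (X * a) = X • E a := by
  induction hX using Algebra.adjoin_induction generalizing a with
  | mem p hp => exact hE.map_idempotent_mul hE1 hp a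
  | algebraMap c => rw [← Algebra.smul_def, map_smul, algebraMap_smul]
  | add X Y _ _ ihX ihY => rw [add_mul, map_add, ihX, ihY, add_smul]
  | mul X Y _ _ ihX ihY => rw [mul_assoc, ihX, ihY, mul_smul]

theorem map_eq_zero_of_mem_adjoin [Invertible (2 : A)] [LinearMapClass F R A M]
    (hE : JordanSymmetricOnOrthogonal E) (hE1 : E 1 = 0) {X : A}
    (hX : X ∈ Algebra.adjoin R {e : A | IsIdempotentElem e}) : E X = 0 := by
  simpa only [mul_one, hE1, smul_zero] using hE.map_mul_of_mem_adjoin hE1 hX 1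

theorem sub_smul_jordanSMulRight [IsScalarTower R Aᵐᵒᵖ M] {δ : A →ₗ[R] M}
    (hδ : JordanSymmetricOnOrthogonal δ) (c : R) (m : M) :
    JordanSymmetricOnOrthogonal ⇑(δ - c • jordanSMulRight R m : A →ₗ[R] M) := by
  intro a b hab hba
  simp only [LinearMap.sub_apply, LinearMap.smul_apply, jordanSMulRight, LinearMap.coe_mk,
    AddHom.coe_mk, jordanSMul_sub, jordanSMul_smul, hδ a b hab hba,
    jordanSMul_jordanSMul_comm_of_mul_eq_zero hab hba]

end JordanSymmetricOnOrthogonal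

end Orthogonal

theorem stmt16_general {A : Type*} {M : Type*}
    [Ring A] [Algebra ℂ A]
    [AddCommGroup M] [Module ℂ M] [Module A M] [Module Aᵐᵒᵖ M]
    [SMulCommClass A Aᵐᵒᵖ M] [IsScalarTower ℂ A M] [IsScalarTower ℂ Aᵐᵒᵖ M]
    (J : Set A)
    (hJsub : ∀ x ∈ J, x ∈ Algebra.adjoin ℂ {e : A | IsIdempotentElem e})
    (hJr : ∀ (a : A), ∀ x ∈ J, x * a ∈ J)
    (hM : ∀ m : M, (∀ x ∈ J, op x • (x • m) = 0) → m = 0)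
    (δ : A →ₗ[ℂ] M)
    (h : ∀ a b : A, a * b + b * a = 0 →
      (op b • δ a + b • δ a) - (a • δ b + op a • δ b) = 0) :
    ∀ a : A, δ a = ((2 : ℂ)⁻¹) • (a • δ 1 + op a • δ 1) := by
  let _ : Invertible (2 : A) := (invertibleTwo.map (algebraMap ℂ A)).copy 2 (map_ofNat _ 2).symm
  have hδ : JordanSymmetricOnOrthogonal δ := fun a b hab hba =>
    (add_comm _ _).trans (sub_eq_zero.mp (h a b (by rw [hab, hba, add_zero])))
  set E := δ - (2 : ℂ)⁻¹ • jordanSMulRight ℂ (δ 1)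
  have hE : JordanSymmetricOnOrthogonal E := hδ.sub_smul_jordanSMulRight _ _
  have hE1 : E 1 = 0 := by
    simp [E, jordanSMulRight, jordanSMul, ← two_smul ℂ (δ 1)]
  intro a
  have hEa : E a = 0 := hM _ fun x hx => by
    rw [← hE.map_mul_of_mem_adjoin hE1 (hJsub x hx),
      hE.map_eq_zero_of_mem_adjoin hE1 (hJsub _ (hJr a x hx)), smul_zero]
  exact sub_eq_zero.mp hEa

/-- Let `M` have property `𝕄`. If `δ(A)∘B − A∘δ(B) = 0` whenever `A∘B = 0`,
then `δ(A) = ½(A δ(I) + δ(I) A)` for every `A`. -/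
theorem stmt16 {A : Type*} {M : Type*}
    [Ring A] [Algebra ℂ A]
    [AddCommGroup M] [Module ℂ M] [Module A M] [Module Aᵐᵒᵖ M]
    [SMulCommClass A Aᵐᵒᵖ M] [IsScalarTower ℂ A M] [IsScalarTower ℂ Aᵐᵒᵖ M]
    (J : Set A)
    (hJsub : ∀ x ∈ J, x ∈ Algebra.adjoin ℂ {e : A | IsIdempotentElem e})
    (hJadd : ∀ x ∈ J, ∀ y ∈ J, x + y ∈ J)
    (hJl : ∀ (a : A), ∀ x ∈ J, a * x ∈ J)
    (hJr : ∀ (a : A), ∀ x ∈ J, x * a ∈ J)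
    (hM : ∀ m : M, (∀ x ∈ J, op x • (x • m) = 0) → m = 0)
    (δ : A →ₗ[ℂ] M)
    (h : ∀ a b : A, a * b + b * a = 0 →
      (op b • δ a + b • δ a) - (a • δ b + op a • δ b) = 0) :
    ∀ a : A, δ a = ((2 : ℂ)⁻¹) • (a • δ 1 + op a • δ 1) :=
  stmt16_general J hJsub hJr hM δ h
end

section
/- Let M have the property 𝕄. If φ : A → M is linear and A∘φ(B) = 0 whenever A∘B = 0, then φ(A) = φ(I)A = Aφ(I) for every A ∈ A. -/
/-! For an idempotent `p`, the pairs `p ∘ (1 - p) = 0` show that `φ(1)` commutes with `p` and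
`φ(p) = p φ(1)`. If `n` lies in an off-diagonal Peirce corner of `p`, then `p + n` is again
idempotent, so `φ(n) = n φ(1)`; together with the diagonal corners this gives
`φ(p a) = p φ(a)` and `φ(a p) = φ(a) p`. The elements `x` with `φ(x a) = x φ(a)` and
`φ(a x) = φ(a) x` for all `a` form a subalgebra, which therefore contains `J`. For `x ∈ J`,
`x φ(a) x = φ(x a x) = x a x φ(1) = x (a φ(1)) x = x (φ(1) a) x`, and property 𝕄 finishes. -/

open MulOpposite

theorem IsIdempotentElem.add_of_mul_add_mul_eq {R : Type*} [Ring R] {p n : R}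
    (hp : IsIdempotentElem p) (hpn : p * n + n * p = n) (hn : n * n = 0) :
    IsIdempotentElem (p + n) := by
  rw [IsIdempotentElem, add_mul, mul_add, mul_add, hp.eq, hn, add_zero, add_assoc, hpn]

theorem IsIdempotentElem.add_mul_one_sub {R : Type*} [Ring R] {p b : R} (hp : IsIdempotentElem p)
    (hb : p * b = b) : IsIdempotentElem (p + b * (1 - p)) := by
  have hqb : (1 - p) * b = 0 := by rw [sub_mul, one_mul, hb, sub_self]
  refine hp.add_of_mul_add_mul_eq ?_ ?_
  · rw [← mul_assoc, hb, mul_assoc, hp.one_sub_mul_self, mul_zero, add_zero]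
  · rw [mul_assoc, ← mul_assoc (1 - p), hqb, zero_mul, mul_zero]

theorem IsIdempotentElem.add_one_sub_mul {R : Type*} [Ring R] {p b : R} (hp : IsIdempotentElem p)
    (hb : b * p = b) : IsIdempotentElem (p + (1 - p) * b) := by
  have hbq : b * (1 - p) = 0 := by rw [mul_sub, mul_one, hb, sub_self]
  refine hp.add_of_mul_add_mul_eq ?_ ?_
  · rw [← mul_assoc, hp.mul_one_sub_self, zero_mul, zero_add, mul_assoc, hb]
  · rw [mul_assoc, ← mul_assoc b, hbq, zero_mul, mul_zero]

section Bimodule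

variable {A M : Type*} [Ring A] [AddCommGroup M] [Module A M] [Module Aᵐᵒᵖ M]
  [SMulCommClass A Aᵐᵒᵖ M]

theorem IsIdempotentElem.smul_eq_zero_of_smul_add_op_smul_eq_zero [IsAddTorsionFree M]
    {e : A} (he : IsIdempotentElem e) {m : M} (h : e • m + op e • m = 0) :
    e • m = 0 ∧ op e • m = 0 := by
  have hl : e • m + op e • e • m = 0 := by
    simpa only [smul_add, smul_smul, he.eq, smul_comm e (op e), smul_zero] using
      congrArg (e • ·) h
  have hr : op e • e • m + op e • m = 0 := by
    simpa only [smul_add, smul_smul, ← op_mul, he.eq, smul_zero] using congrArg (op e • ·) h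
  have hlr : e • m = op e • m :=
    (eq_neg_of_add_eq_zero_left hl).trans (eq_neg_of_add_eq_zero_right hr).symm
  rw [hlr, ← two_nsmul, two_nsmul_eq_zero] at h
  exact ⟨hlr.trans h, h⟩

def PreservesJordanZeroProducts {F : Type*} [FunLike F A M] (φ : F) : Prop :=
  ∀ a b : A, a * b + b * a = 0 → a • φ b + op a • φ b = 0

namespace PreservesJordanZeroProducts

variable [IsAddTorsionFree M] {F : Type*} [FunLike F A M] {φ : F}

theorem smul_map_eq_self_and_op_smul_map_eq_self (hφ : PreservesJordanZeroProducts φ) {p b : A}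
    (hp : IsIdempotentElem p) (hpb : p * b = b) (hbp : b * p = b) :
    p • φ b = φ b ∧ op p • φ b = φ b := by
  obtain ⟨hl, hr⟩ := hp.one_sub.smul_eq_zero_of_smul_add_op_smul_eq_zero <|
    hφ (1 - p) b (by simp [sub_mul, mul_sub, hpb, hbp])
  rw [sub_smul, one_smul, sub_eq_zero] at hl
  rw [op_sub, op_one, sub_smul, one_smul, sub_eq_zero] at hr
  exact ⟨hl.symm, hr.symm⟩

variable [AddMonoidHomClass F A M]

theorem map_eq_smul_map_one (hφ : PreservesJordanZeroProducts φ) {p : A}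
    (hp : IsIdempotentElem p) : φ p = p • φ 1 ∧ φ p = op p • φ 1 := by
  obtain ⟨hpl, hpr⟩ := hφ.smul_map_eq_self_and_op_smul_map_eq_self hp hp.eq hp.eq
  have hsum : p • φ 1 + op p • φ 1 = φ p + φ p := by
    have := hφ p (1 - p) (by simp [mul_sub, sub_mul, hp.eq])
    rw [map_sub, smul_sub, smul_sub, hpl, hpr] at this
    rw [← sub_eq_zero, ← this]
    abel
  have hleft : p • φ 1 + op p • p • φ 1 = φ p + φ p := by
    simpa only [smul_add, smul_smul, hp.eq, hpl, smul_comm p (op p)] using congrArg (p • ·) hsum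
  have hright : op p • p • φ 1 + op p • φ 1 = φ p + φ p := by
    simpa only [smul_add, smul_smul, ← op_mul, hp.eq, hpr] using congrArg (op p • ·) hsum
  have hcomm : p • φ 1 = op p • φ 1 :=
    (add_right_cancel (hright.trans hsum.symm)).symm.trans
      (add_left_cancel (hleft.trans hsum.symm))
  rw [← hcomm, ← two_nsmul, ← two_nsmul] at hsum
  have hφp := (nsmul_right_injective two_ne_zero hsum).symm
  exact ⟨hφp, hφp.trans hcomm⟩

theorem map_eq_smul_map_one_of_isIdempotentElem_add (hφ : PreservesJordanZeroProducts φ) {p n : A}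
    (hp : IsIdempotentElem p) (hpn : IsIdempotentElem (p + n)) :
    φ n = n • φ 1 ∧ φ n = op n • φ 1 := by
  obtain ⟨hpl, hpr⟩ := hφ.map_eq_smul_map_one hp
  obtain ⟨hpnl, hpnr⟩ := hφ.map_eq_smul_map_one hpn
  rw [map_add, add_smul, ← hpl] at hpnl
  rw [map_add, op_add, add_smul, ← hpr] at hpnr
  exact ⟨add_left_cancel hpnl, add_left_cancel hpnr⟩

theorem smul_map_eq_self (hφ : PreservesJordanZeroProducts φ) {p b : A}
    (hp : IsIdempotentElem p) (hb : p * b = b) : p • φ b = φ b := by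
  have hsplit : b * p + b * (1 - p) = b := by rw [mul_sub, mul_one, add_sub_cancel]
  have hdiag := (hφ.smul_map_eq_self_and_op_smul_map_eq_self (b := b * p) hp
    (by rw [← mul_assoc, hb]) (by rw [mul_assoc, hp.eq])).1
  have hcorner := (hφ.map_eq_smul_map_one_of_isIdempotentElem_add hp (hp.add_mul_one_sub hb)).1
  calc p • φ b = p • φ (b * p) + p • φ (b * (1 - p)) := by rw [← smul_add, ← map_add, hsplit]
    _ = φ (b * p) + φ (b * (1 - p)) := by rw [hdiag, hcorner, smul_smul, ← mul_assoc, hb]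
    _ = φ b := by rw [← map_add, hsplit]

theorem op_smul_map_eq_self (hφ : PreservesJordanZeroProducts φ) {p b : A}
    (hp : IsIdempotentElem p) (hb : b * p = b) : op p • φ b = φ b := by
  have hsplit : p * b + (1 - p) * b = b := by rw [sub_mul, one_mul, add_sub_cancel]
  have hdiag := (hφ.smul_map_eq_self_and_op_smul_map_eq_self (b := p * b) hp
    (by rw [← mul_assoc, hp.eq]) (by rw [mul_assoc, hb])).2
  have hcorner := (hφ.map_eq_smul_map_one_of_isIdempotentElem_add hp (hp.add_one_sub_mul hb)).2
  calc op p • φ b = op p • φ (p * b) + op p • φ ((1 - p) * b) := by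
        rw [← smul_add, ← map_add, hsplit]
    _ = φ (p * b) + φ ((1 - p) * b) := by rw [hdiag, hcorner, smul_smul, ← op_mul, mul_assoc, hb]
    _ = φ b := by rw [← map_add, hsplit]

theorem smul_map_eq_map_mul (hφ : PreservesJordanZeroProducts φ) {p : A}
    (hp : IsIdempotentElem p) (a : A) : p • φ a = φ (p * a) := by
  have hq := hφ.smul_map_eq_self hp.one_sub (b := (1 - p) * a)
    (by rw [← mul_assoc, hp.one_sub.eq])
  calc p • φ a = p • φ (p * a) + p • φ ((1 - p) * a) := by
        rw [← smul_add, ← map_add, ← add_mul, add_sub_cancel, one_mul]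
    _ = φ (p * a) := by
        rw [hφ.smul_map_eq_self hp (by rw [← mul_assoc, hp.eq]), ← hq, smul_smul,
          hp.mul_one_sub_self, zero_smul, add_zero]

theorem op_smul_map_eq_map_mul (hφ : PreservesJordanZeroProducts φ) {p : A}
    (hp : IsIdempotentElem p) (a : A) : op p • φ a = φ (a * p) := by
  have hq := hφ.op_smul_map_eq_self hp.one_sub (b := a * (1 - p))
    (by rw [mul_assoc, hp.one_sub.eq])
  calc op p • φ a = op p • φ (a * p) + op p • φ (a * (1 - p)) := by
        rw [← smul_add, ← map_add, ← mul_add, add_sub_cancel, mul_one]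
    _ = φ (a * p) := by
        rw [hφ.op_smul_map_eq_self hp (by rw [mul_assoc, hp.eq]), ← hq, smul_smul,
          ← op_mul, hp.one_sub_mul_self, op_zero, zero_smul, add_zero]

end PreservesJordanZeroProducts

end Bimodule

namespace LinearMap

variable {R A M : Type*} [CommSemiring R] [Semiring A] [Algebra R A] [AddCommMonoid M]
  [Module R M] [Module A M] [Module Aᵐᵒᵖ M] [IsScalarTower R A M] [IsScalarTower R Aᵐᵒᵖ M]

def bimoduleSubalgebra (φ : A →ₗ[R] M) : Subalgebra R A where
  carrier := {x | ∀ a, x • φ a = φ (x * a) ∧ op x • φ a = φ (a * x)}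
  mul_mem' {x y} hx hy a :=
    ⟨by rw [mul_smul, (hy a).1, (hx _).1, mul_assoc],
      by rw [op_mul, mul_smul, (hx a).2, (hy _).2, mul_assoc]⟩
  add_mem' {x y} hx hy a :=
    ⟨by rw [add_smul, (hx a).1, (hy a).1, ← map_add, add_mul],
      by rw [op_add, add_smul, (hx a).2, (hy a).2, ← map_add, mul_add]⟩
  algebraMap_mem' r a :=
    ⟨by rw [algebraMap_smul, ← map_smul, Algebra.smul_def],
      by rw [← MulOpposite.algebraMap_apply, algebraMap_smul, ← map_smul, Algebra.smul_def,
        Algebra.commutes]⟩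

theorem op_smul_smul_map_eq [SMulCommClass A Aᵐᵒᵖ M] {φ : A →ₗ[R] M} {x a : A}
    (hx : x ∈ φ.bimoduleSubalgebra) (hxax : x * a * x ∈ φ.bimoduleSubalgebra) :
    op x • x • φ a = op x • x • op a • φ 1 ∧ op x • x • φ a = op x • x • a • φ 1 := by
  have hsandwich : op x • x • φ a = φ (x * a * x) := by rw [(hx a).1, (hx _).2]
  have hcomm : x • φ 1 = op x • φ 1 := by rw [(hx 1).1, (hx 1).2, mul_one, one_mul]
  constructor
  · rw [hsandwich, smul_comm x (op a), hcomm, smul_smul, smul_smul, ← op_mul, ← op_mul,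
      ← mul_assoc, (hxax 1).2, one_mul]
  · rw [hsandwich, smul_smul x a, ← smul_comm (x * a) (op x), ← hcomm, smul_smul,
      (hxax 1).1, mul_one]

end LinearMap

theorem PreservesJordanZeroProducts.adjoin_le_bimoduleSubalgebra {R A M : Type*} [CommSemiring R]
    [Ring A] [Algebra R A] [AddCommGroup M] [IsAddTorsionFree M] [Module R M] [Module A M]
    [Module Aᵐᵒᵖ M] [SMulCommClass A Aᵐᵒᵖ M] [IsScalarTower R A M] [IsScalarTower R Aᵐᵒᵖ M]
    {φ : A →ₗ[R] M} (hφ : PreservesJordanZeroProducts φ) :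
    Algebra.adjoin R {e : A | IsIdempotentElem e} ≤ φ.bimoduleSubalgebra :=
  Algebra.adjoin_le fun _ he a => ⟨hφ.smul_map_eq_map_mul he a, hφ.op_smul_map_eq_map_mul he a⟩

theorem stmt18_general {A : Type*} {M : Type*}
    [Ring A] [Algebra ℂ A]
    [AddCommGroup M] [Module ℂ M] [Module A M] [Module Aᵐᵒᵖ M]
    [SMulCommClass A Aᵐᵒᵖ M] [IsScalarTower ℂ A M] [IsScalarTower ℂ Aᵐᵒᵖ M]
    (J : Set A)
    (hJsub : ∀ x ∈ J, x ∈ Algebra.adjoin ℂ {e : A | IsIdempotentElem e})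
    (hJl : ∀ (a : A), ∀ x ∈ J, a * x ∈ J)
    (hM : ∀ m : M, (∀ x ∈ J, op x • (x • m) = 0) → m = 0)
    (φ : A →ₗ[ℂ] M)
    (h : ∀ a b : A, a * b + b * a = 0 → a • φ b + op a • φ b = 0) :
    ∀ a : A, φ a = op a • φ 1 ∧ φ a = a • φ 1 := by
  have : IsAddTorsionFree M := .of_isTorsionFree ℂ M
  have hJ : ∀ x ∈ J, x ∈ φ.bimoduleSubalgebra := fun x hx =>
    PreservesJordanZeroProducts.adjoin_le_bimoduleSubalgebra h (hJsub x hx)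
  intro a
  have key x (hx : x ∈ J) := LinearMap.op_smul_smul_map_eq (hJ x hx) (hJ _ (hJl (x * a) x hx))
  refine ⟨sub_eq_zero.mp (hM _ fun x hx => ?_), sub_eq_zero.mp (hM _ fun x hx => ?_)⟩
  · rw [smul_sub, smul_sub, (key x hx).1, sub_self]
  · rw [smul_sub, smul_sub, (key x hx).2, sub_self]

/-- Let `M` have property `𝕄`. If `A∘φ(B) = 0` whenever `A∘B = 0`, then
`φ(A) = φ(I)A = A φ(I)` for every `A`. -/
theorem stmt18 {A : Type*} {M : Type*}
    [Ring A] [Algebra ℂ A]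
    [AddCommGroup M] [Module ℂ M] [Module A M] [Module Aᵐᵒᵖ M]
    [SMulCommClass A Aᵐᵒᵖ M] [IsScalarTower ℂ A M] [IsScalarTower ℂ Aᵐᵒᵖ M]
    (J : Set A)
    (hJsub : ∀ x ∈ J, x ∈ Algebra.adjoin ℂ {e : A | IsIdempotentElem e})
    (hJadd : ∀ x ∈ J, ∀ y ∈ J, x + y ∈ J)
    (hJl : ∀ (a : A), ∀ x ∈ J, a * x ∈ J)
    (hJr : ∀ (a : A), ∀ x ∈ J, x * a ∈ J)
    (hM : ∀ m : M, (∀ x ∈ J, op x • (x • m) = 0) → m = 0)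
    (φ : A →ₗ[ℂ] M)
    (h : ∀ a b : A, a * b + b * a = 0 → a • φ b + op a • φ b = 0) :
    ∀ a : A, φ a = op a • φ 1 ∧ φ a = a • φ 1 :=
  stmt18_general J hJsub hJl hM φ h
end
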